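/- arXiv:1307.4861 — 9 statements merged into one kernel-verified Lean document; each statement's English description precedes it below -/
import Mathlib

section
/- Let G be a group generated by a subset A, and suppose every element of G is a product of k palindromes over A. Let W = (ℤ → G) ⋊ ℤ, where ℤ acts on the group of all functions ℤ → G (under pointwise multiplication) by shifts: (n • f)(x) = f(x − n). For a ∈ A let δ_a : ℤ → G be the function equal to a at 0 and to the identity elsewhere, and let t = (1, 1) ∈ W where the first coordinate is the constant-identity function. Let S = {(δ_a, 0) : a ∈ A} ∪ {t}. Then every element of the subgroup of W generated by S (a copy of the restricted wreath product G ≀ ℤ) is a product of 2 + k palindromes over S. -/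
/-!
Write an element of the restricted wreath product as `(f, t ^ M)` with `f` supported in `[-N, N]`.
A word `v` made of blocks `t ^ m u t ^ (-m)` (with `u` a word over `A`) evaluates to the function
carrying the value of `u` at `m`, while `v.reverse` carries the value of `u.reverse` at `-m`; so in a
palindrome `v.reverse ++ c ++ v` the entries are mirrored about the centre of `c`. The palindrome
around the letters of a palindrome `P` of `G` reflects about `0`, the palindrome around `t` about
`1/2`. Two such reflections compose to a unit translation, so their words can be chosen one after
the other from the outside of the support inwards until only the value at `0` is left; that value
is a product of `k` palindromes of `G`, the first being `P` and the other `k - 1` read as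
palindromes over the `δ a`. A last palindrome `t ^ (M - 1)` corrects the shift.
-/

/-- A palindromic word over `X`: a finite list of elements of `X ∪ X⁻¹`
that reads the same forwards and backwards. -/
def IsPalindromicWord {G : Type*} [Group G] (X : Set G) (w : List G) : Prop :=
  (∀ g ∈ w, g ∈ X ∨ g⁻¹ ∈ X) ∧ w.reverse = w

/-- `g` is a product (in order) of the evaluations of `n` palindromic words over `X`. -/
def IsProdOfPalindromes {G : Type*} [Group G] (X : Set G) (n : ℕ) (g : G) : Prop :=
  ∃ ws : List (List G), ws.length = n ∧ (∀ w ∈ ws, IsPalindromicWord X w) ∧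
    (ws.map List.prod).prod = g

/-- The shift automorphism of the group of all functions `ℤ → G`:
`(n • f) (x) = f (x - n)`. -/
def shiftAut (G : Type*) [Group G] (n : ℤ) : (ℤ → G) ≃* (ℤ → G) where
  toFun f := fun x => f (x - n)
  invFun f := fun x => f (x + n)
  left_inv f := funext fun x => by simp
  right_inv f := funext fun x => by simp
  map_mul' f g := rfl

/-- `ℤ` acting on `ℤ → G` by shifts, as a homomorphism to the automorphism group. -/
def shiftHom (G : Type*) [Group G] : Multiplicative ℤ →* MulAut (ℤ → G) where
  toFun n := shiftAut G n.toAdd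
  map_one' := by
    ext f x
    simp [shiftAut]
  map_mul' m n := by
    ext f x
    simp only [shiftAut, toAdd_mul, MulAut.mul_apply, MulEquiv.coe_mk, Equiv.coe_fn_mk]
    congr 1
    ring

/-- The (unrestricted) wreath-type product `(ℤ → G) ⋊ ℤ`. -/
abbrev WrZ (G : Type*) [Group G] := (ℤ → G) ⋊[shiftHom G] Multiplicative ℤ

/-- The function `ℤ → G` equal to `a` at `0` and to the identity elsewhere. -/
def delta {G : Type*} [Group G] (a : G) : ℤ → G := fun x => if x = 0 then a else 1

open SemidirectProduct

section Palindromes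

variable {G H : Type*} [Group G] [Group H] {X : Set G} {Y : Set H}

def IsWordOver (X : Set G) (w : List G) : Prop :=
  ∀ g ∈ w, g ∈ X ∨ g⁻¹ ∈ X

theorem isWordOver_append {u v : List G} :
    IsWordOver X (u ++ v) ↔ IsWordOver X u ∧ IsWordOver X v :=
  List.forall_mem_append

theorem isWordOver_reverse {u : List G} : IsWordOver X u.reverse ↔ IsWordOver X u := by
  simp only [IsWordOver, List.mem_reverse]

theorem IsWordOver.map {u : List G} (φ : G →* H) (hφ : ∀ a ∈ X, φ a ∈ Y)
    (hu : IsWordOver X u) : IsWordOver Y (u.map φ) := by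
  simp only [IsWordOver, List.mem_map, forall_exists_index, and_imp, forall_apply_eq_imp_iff₂]
  intro g hg
  rcases hu g hg with h | h
  · exact Or.inl (hφ g h)
  · exact Or.inr (by simpa using hφ _ h)

theorem exists_isWordOver_prod_eq (hX : Subgroup.closure X = ⊤) (g : G) :
    ∃ u, IsWordOver X u ∧ u.prod = g := by
  have hg : g ∈ (Subgroup.closure X).toSubmonoid := by simp [hX]
  rw [Subgroup.closure_toSubmonoid] at hg
  exact Submonoid.exists_list_of_mem_closure hg

theorem IsPalindromicWord.map {w : List G} (φ : G →* H) (hφ : ∀ a ∈ X, φ a ∈ Y)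
    (hw : IsPalindromicWord X w) : IsPalindromicWord Y (w.map φ) :=
  ⟨IsWordOver.map φ hφ hw.1, by rw [← List.map_reverse, hw.2]⟩

theorem IsPalindromicWord.wrap {c v : List G} (hc : IsPalindromicWord X c)
    (hv : IsWordOver X v) : IsPalindromicWord X (v.reverse ++ c ++ v) := by
  refine ⟨?_, by simp [hc.2]⟩
  exact isWordOver_append.2 ⟨isWordOver_append.2 ⟨isWordOver_reverse.2 hv, hc.1⟩, hv⟩

theorem IsPalindromicWord.isProdOfPalindromes {w : List G} (hw : IsPalindromicWord X w) :
    IsProdOfPalindromes X 1 w.prod :=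
  ⟨[w], rfl, by simpa using hw, by simp⟩

theorem isProdOfPalindromes_one (n : ℕ) : IsProdOfPalindromes X n 1 :=
  ⟨List.replicate n [], by simp, by simp [IsPalindromicWord, List.mem_replicate], by simp⟩

theorem IsProdOfPalindromes.mul {m n : ℕ} {g h : G} (hg : IsProdOfPalindromes X m g)
    (hh : IsProdOfPalindromes X n h) : IsProdOfPalindromes X (m + n) (g * h) := by
  obtain ⟨us, rfl, hus, rfl⟩ := hg
  obtain ⟨vs, rfl, hvs, rfl⟩ := hh
  exact ⟨us ++ vs, by simp, List.forall_mem_append.2 ⟨hus, hvs⟩, by simp⟩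

theorem IsProdOfPalindromes.map {n : ℕ} {g : G} (φ : G →* H) (hφ : ∀ a ∈ X, φ a ∈ Y)
    (hg : IsProdOfPalindromes X n g) : IsProdOfPalindromes Y n (φ g) := by
  obtain ⟨ws, rfl, hws, rfl⟩ := hg
  refine ⟨ws.map (List.map φ), by simp, ?_, ?_⟩
  · simp only [List.mem_map, forall_exists_index, and_imp, forall_apply_eq_imp_iff₂]
    exact fun w hw => (hws w hw).map φ hφ
  · simp [map_list_prod, Function.comp_def]

theorem IsProdOfPalindromes.eq_one_of_zero {g : G} (hg : IsProdOfPalindromes X 0 g) : g = 1 := by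
  obtain ⟨ws, hws, -, rfl⟩ := hg
  simp [List.length_eq_zero_iff.1 hws]

end Palindromes

theorem List.prod_map_mulSingle_of_nodup {ι M : Type*} [DecidableEq ι] [Monoid M]
    {L : List ι} (hL : L.Nodup) (g : ι → M) :
    (L.map fun i => Pi.mulSingle i (g i)).prod = fun i => if i ∈ L then g i else 1 := by
  induction L with
  | nil => funext i; simp
  | cons j L ih =>
    obtain ⟨hj, hL⟩ := List.nodup_cons.1 hL
    funext i
    rw [List.map_cons, List.prod_cons, ih hL, Pi.mul_apply, Pi.mulSingle_apply]
    by_cases hij : i = j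
    · subst hij; simp [hj]
    · simp [hij]

namespace WrZ

variable {G : Type*} [Group G]

def t : WrZ G := inr (Multiplicative.ofAdd 1)

def lamp : G →* WrZ G := inl.comp (MonoidHom.mulSingle (fun _ : ℤ => G) 0)

def gens (A : Set G) : Set (WrZ G) :=
  {w : WrZ G | ∃ a ∈ A, w = ⟨delta a, 1⟩} ∪ {(⟨1, Multiplicative.ofAdd 1⟩ : WrZ G)}

theorem lamp_mem_gens {A : Set G} {a : G} (ha : a ∈ A) : lamp a ∈ gens A := by
  refine Or.inl ⟨a, ha, SemidirectProduct.ext ?_ rfl⟩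
  funext x
  simp [lamp, delta, Pi.mulSingle_apply]

theorem t_mem_gens (A : Set G) : (t : WrZ G) ∈ gens A := Or.inr rfl

theorem inr_ofAdd (n : ℤ) : (inr (Multiplicative.ofAdd n) : WrZ G) = t ^ n := by
  rw [t, ← map_zpow, ← ofAdd_zsmul, smul_eq_mul, mul_one]

theorem t_zpow_mul_inl (n : ℤ) (φ : ℤ → G) :
    t ^ n * inl φ = inl (fun x => φ (x - n)) * t ^ n := by
  rw [← inr_ofAdd]
  change _ = inl (shiftHom G (Multiplicative.ofAdd n) φ) * _
  rw [inl_aut, map_inv, inv_mul_cancel_right]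

theorem inl_mul_t_mul_inl (φ ψ : ℤ → G) (M : ℤ) :
    inl φ * t * inl ψ * t ^ (M - 1) = inl (fun x => φ x * ψ (x - 1)) * t ^ M := by
  have h := t_zpow_mul_inl 1 ψ
  rw [zpow_one] at h
  rw [mul_assoc (inl φ), h, ← mul_assoc, ← map_mul, mul_assoc, ← zpow_one_add, add_sub_cancel]
  rfl

def tPow : ℤ → List (WrZ G)
  | (n : ℕ) => List.replicate n t
  | .negSucc n => List.replicate (n + 1) t⁻¹

theorem prod_tPow (n : ℤ) : (tPow n).prod = (t : WrZ G) ^ n := by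
  cases n <;> simp [tPow, zpow_negSucc]

theorem reverse_tPow (n : ℤ) : (tPow n).reverse = (tPow n : List (WrZ G)) := by
  cases n <;> simp [tPow]

theorem isWordOver_tPow (A : Set G) (n : ℤ) : IsWordOver (gens A) (tPow n) := by
  cases n <;> simp [tPow, IsWordOver, List.mem_replicate, t_mem_gens]

theorem isPalindromicWord_tPow (A : Set G) (n : ℤ) : IsPalindromicWord (gens A) (tPow n) :=
  ⟨isWordOver_tPow A n, reverse_tPow n⟩

def lampBlock (m : ℤ) (u : List G) : List (WrZ G) := tPow m ++ u.map lamp ++ tPow (-m)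

theorem prod_lampBlock (m : ℤ) (u : List G) :
    (lampBlock m u).prod = inl (Pi.mulSingle m u.prod) := by
  rw [lampBlock, List.prod_append, List.prod_append, prod_tPow, prod_tPow, ← map_list_prod]
  change t ^ m * inl (Pi.mulSingle 0 u.prod : ℤ → G) * t ^ (-m) = _
  rw [t_zpow_mul_inl, mul_assoc, ← zpow_add, add_neg_cancel, zpow_zero, mul_one]
  congr 1
  funext x
  simp [Pi.mulSingle_apply, sub_eq_zero]

theorem reverse_lampBlock (m : ℤ) (u : List G) :
    (lampBlock m u).reverse = lampBlock (-m) u.reverse := by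
  simp [lampBlock, reverse_tPow, List.map_reverse]

theorem isWordOver_lampBlock {A : Set G} (m : ℤ) {u : List G} (hu : IsWordOver A u) :
    IsWordOver (gens A) (lampBlock m u) :=
  isWordOver_append.2 ⟨isWordOver_append.2 ⟨isWordOver_tPow A m,
    hu.map lamp fun _ => lamp_mem_gens⟩, isWordOver_tPow A (-m)⟩

theorem prod_map_inl_mulSingle {L : List ℤ} (hL : L.Nodup) (g : ℤ → G) :
    (L.map fun m => (inl (Pi.mulSingle m (g m)) : WrZ G)).prod =
      inl fun x => if x ∈ L then g x else 1 := by
  rw [← List.prod_map_mulSingle_of_nodup hL, map_list_prod, List.map_map]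
  rfl

noncomputable def lampWord (s : Finset ℤ) (γ : ℤ → List G) : List (WrZ G) :=
  s.toList.flatMap fun m => lampBlock m (γ m)

variable {s : Finset ℤ} {γ : ℤ → List G}

theorem prod_lampWord (hγ : ∀ x ∉ s, γ x = []) :
    (lampWord s γ).prod = inl fun x => (γ x).prod := by
  rw [lampWord, List.flatMap, List.prod_flatten, List.map_map]
  simp only [Function.comp_def, prod_lampBlock]
  rw [prod_map_inl_mulSingle s.nodup_toList]
  congr 1
  funext x
  split_ifs with hx
  · rfl
  · simp [hγ x (by simpa using hx)]

theorem prod_reverse_lampWord (hγ : ∀ x ∉ s, γ x = []) :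
    (lampWord s γ).reverse.prod = inl fun x => (γ (-x)).reverse.prod := by
  have hL : (s.toList.reverse.map Neg.neg).Nodup :=
    List.Nodup.map neg_injective (List.nodup_reverse.2 s.nodup_toList)
  rw [lampWord, List.reverse_flatMap, List.flatMap, List.prod_flatten, List.map_map]
  simp only [Function.comp_def, reverse_lampBlock, prod_lampBlock]
  have hprod := prod_map_inl_mulSingle hL fun x => (γ (-x)).reverse.prod
  simp only [List.map_map, Function.comp_def, neg_neg] at hprod
  rw [hprod]
  congr 1
  funext x
  split_ifs with hx
  · rfl
  · rw [hγ (-x) fun h => hx (List.mem_map.2 ⟨-x, by simpa using h, neg_neg x⟩)]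
    rfl

def boundedSupport : Subgroup (WrZ G) where
  carrier := {g | ∃ N : ℕ, ∀ x : ℤ, N < |x| → g.left x = 1}
  mul_mem' := by
    rintro u v ⟨Nu, hu⟩ ⟨Nv, hv⟩
    refine ⟨Nu + Nv + u.right.toAdd.natAbs, fun x hx => ?_⟩
    simp only [Int.abs_eq_natAbs, Nat.cast_lt] at hu hv hx
    change u.left x * v.left (x - u.right.toAdd) = 1
    rw [hu x (by omega), hv _ (by omega), one_mul]
  one_mem' := ⟨0, fun _ _ => rfl⟩
  inv_mem' := by
    rintro u ⟨N, hu⟩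
    refine ⟨N + u.right.toAdd.natAbs, fun x hx => ?_⟩
    simp only [Int.abs_eq_natAbs, Nat.cast_lt] at hu hx
    change (u.left (x - (u.right⁻¹).toAdd))⁻¹ = 1
    rw [toAdd_inv, hu _ (by omega), inv_one]

theorem closure_gens_le_boundedSupport (A : Set G) :
    Subgroup.closure (gens A) ≤ boundedSupport := by
  rw [Subgroup.closure_le]
  rintro g (⟨a, -, rfl⟩ | rfl)
  · refine ⟨0, fun x hx => if_neg ?_⟩
    rintro rfl
    simp at hx
  · exact ⟨0, fun _ _ => rfl⟩

section Chain

variable (w : G → List G) (f : ℤ → G) (N : ℕ)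

/-- `chainOdd x` (for `0 ≤ x < N`) and `chainEven x` (for `1 ≤ x ≤ N`) are the words of the two
reflecting palindromes: `chainOdd x` ends up at `x + 1` and its reverse at `-x`, `chainEven x` at
`x` and its reverse at `-x`. They are determined from the outside of the support inwards. -/
noncomputable def chainOdd (x : ℤ) : List G :=
  if 0 ≤ x ∧ x < N then
    w ((w (f (-(x + 1)) * (chainOdd (x + 1)).reverse.prod⁻¹)).reverse.prod⁻¹ * f (x + 1))
  else []
termination_by (N - x).toNat

noncomputable def chainEven (x : ℤ) : List G :=
  if 1 ≤ x ∧ x ≤ N then (w (f (-x) * (chainOdd w f N x).reverse.prod⁻¹)).reverse else []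

variable {w f N}

theorem chainOdd_of_not_mem {x : ℤ} (hx : ¬(0 ≤ x ∧ x < N)) : chainOdd w f N x = [] := by
  rw [chainOdd, if_neg hx]

theorem chainEven_of_not_mem {x : ℤ} (hx : ¬(1 ≤ x ∧ x ≤ N)) : chainEven w f N x = [] := by
  rw [chainEven, if_neg hx]

theorem chainOdd_eq {x : ℤ} (h₀ : 0 ≤ x) (hN : x < N) :
    chainOdd w f N x = w ((chainEven w f N (x + 1)).prod⁻¹ * f (x + 1)) := by
  rw [chainOdd, if_pos ⟨h₀, hN⟩, chainEven, if_pos ⟨by omega, by omega⟩]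

theorem isWordOver_chainOdd {A : Set G} (hw : ∀ g, IsWordOver A (w g)) (x : ℤ) :
    IsWordOver A (chainOdd w f N x) := by
  rw [chainOdd]
  split_ifs
  exacts [hw _, List.forall_mem_nil _]

theorem isWordOver_chainEven {A : Set G} (hw : ∀ g, IsWordOver A (w g)) (x : ℤ) :
    IsWordOver A (chainEven w f N x) := by
  rw [chainEven]
  split_ifs
  exacts [isWordOver_reverse.2 (hw _), List.forall_mem_nil _]

theorem apply_eq_chainEven_mul_chainOdd (hw : ∀ g, (w g).prod = g)
    (hf : ∀ x : ℤ, N < |x| → f x = 1) {i : ℤ} (hi : 1 ≤ i) :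
    f i = (chainEven w f N i).prod * (chainOdd w f N (i - 1)).prod := by
  by_cases hiN : i ≤ N
  · rw [chainOdd_eq (by omega) (by omega), sub_add_cancel, hw, mul_inv_cancel_left]
  · rw [chainEven_of_not_mem (by omega), chainOdd_of_not_mem (by omega),
      hf i (by rw [abs_of_pos (by omega)]; omega)]
    simp

theorem apply_neg_eq_chainEven_mul_chainOdd (hw : ∀ g, (w g).prod = g)
    (hf : ∀ x : ℤ, N < |x| → f x = 1) {i : ℤ} (hi : 1 ≤ i) :
    f (-i) = (chainEven w f N i).reverse.prod * (chainOdd w f N i).reverse.prod := by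
  by_cases hiN : i ≤ N
  · rw [chainEven, if_pos ⟨hi, hiN⟩, List.reverse_reverse, hw, inv_mul_cancel_right]
  · rw [chainEven_of_not_mem (by omega), chainOdd_of_not_mem (by omega),
      hf (-i) (by rw [abs_neg, abs_of_pos (by omega)]; omega)]
    simp

theorem apply_eq_chain (hw : ∀ g, (w g).prod = g) (hf : ∀ x : ℤ, N < |x| → f x = 1) {P R : G}
    (hPR : P * R = f 0 * (chainOdd w f N 0).reverse.prod⁻¹) (x : ℤ) :
    f x = (chainEven w f N (-x)).reverse.prod * (Pi.mulSingle 0 P : ℤ → G) x *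
      (chainEven w f N x).prod * (Pi.mulSingle 0 R : ℤ → G) x *
        (chainOdd w f N (-x)).reverse.prod * (chainOdd w f N (x - 1)).prod := by
  rcases lt_trichotomy x 0 with hx | rfl | hx
  · rw [chainEven_of_not_mem (x := x) (by omega), chainOdd_of_not_mem (x := x - 1) (by omega),
      Pi.mulSingle_eq_of_ne hx.ne, Pi.mulSingle_eq_of_ne hx.ne]
    simpa using apply_neg_eq_chainEven_mul_chainOdd hw hf (i := -x) (by omega)
  · rw [chainEven_of_not_mem (x := -0) (by omega), chainEven_of_not_mem (x := 0) (by omega),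
      chainOdd_of_not_mem (x := 0 - 1) (by omega), neg_zero]
    simp [hPR]
  · rw [chainEven_of_not_mem (x := -x) (by omega), chainOdd_of_not_mem (x := -x) (by omega),
      Pi.mulSingle_eq_of_ne hx.ne', Pi.mulSingle_eq_of_ne hx.ne']
    simpa using apply_eq_chainEven_mul_chainOdd hw hf hx

end Chain

theorem isWordOver_lampWord {A : Set G} {s : Finset ℤ} {γ : ℤ → List G}
    (hγ : ∀ x, IsWordOver A (γ x)) : IsWordOver (gens A) (lampWord s γ) := by
  intro g hg
  obtain ⟨m, -, hm⟩ := List.mem_flatMap.1 hg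
  exact isWordOver_lampBlock m (hγ m) g hm

theorem isPalindromicWord_t (A : Set G) : IsPalindromicWord (gens A) [t] :=
  ⟨by simp [t_mem_gens], rfl⟩

theorem inl_mul_t_zpow_eq_chain_prod {w : G → List G} {f : ℤ → G} {N : ℕ}
    (hw : ∀ g, (w g).prod = g) (hf : ∀ x : ℤ, N < |x| → f x = 1) {P : List G} {R : G}
    (hPR : P.prod * R = f 0 * (chainOdd w f N 0).reverse.prod⁻¹) (M : ℤ) :
    inl f * t ^ M =
      ((lampWord (Finset.Icc 0 N) (chainEven w f N)).reverse ++ P.map lamp ++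
          lampWord (Finset.Icc 0 N) (chainEven w f N)).prod * lamp R *
        ((lampWord (Finset.Icc 0 N) (chainOdd w f N)).reverse ++ [t] ++
          lampWord (Finset.Icc 0 N) (chainOdd w f N)).prod * t ^ (M - 1) := by
  have hE : ∀ x ∉ Finset.Icc (0 : ℤ) N, chainEven w f N x = [] := fun x hx =>
    chainEven_of_not_mem fun h => hx (Finset.mem_Icc.2 ⟨by omega, h.2⟩)
  have hO : ∀ x ∉ Finset.Icc (0 : ℤ) N, chainOdd w f N x = [] := fun x hx =>
    chainOdd_of_not_mem fun h => hx (Finset.mem_Icc.2 ⟨h.1, h.2.le⟩)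
  simp only [List.prod_append, List.prod_singleton, prod_lampWord hE, prod_lampWord hO,
    prod_reverse_lampWord hE, prod_reverse_lampWord hO, ← map_list_prod]
  simp only [← mul_assoc, lamp, MonoidHom.comp_apply, MonoidHom.mulSingle_apply, ← map_mul]
  rw [inl_mul_t_mul_inl]
  congr 2
  funext x
  exact apply_eq_chain hw hf hPR x

theorem isProdOfPalindromes_inl_mul_t_zpow {A : Set G} {k : ℕ}
    (hgen : Subgroup.closure A = ⊤) (hA : ∀ g : G, IsProdOfPalindromes A (k + 1) g)
    {f : ℤ → G} {N : ℕ} (hf : ∀ x : ℤ, N < |x| → f x = 1) (M : ℤ) :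
    IsProdOfPalindromes (gens A) (1 + k + 1 + 1) (inl f * t ^ M) := by
  choose w hwA hw using exists_isWordOver_prod_eq hgen
  obtain ⟨_ | ⟨P, Ps⟩, hlen, hpal, hprod⟩ := hA (f 0 * (chainOdd w f N 0).reverse.prod⁻¹)
  · simp at hlen
  have hP : IsPalindromicWord A P := hpal P List.mem_cons_self
  have hPs : IsProdOfPalindromes A k (Ps.map List.prod).prod :=
    ⟨Ps, by simpa using hlen, fun u hu => hpal u (List.mem_cons_of_mem P hu), rfl⟩
  have hlamp : ∀ a ∈ A, lamp a ∈ gens A := fun _ => lamp_mem_gens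
  rw [inl_mul_t_zpow_eq_chain_prod hw hf (by simpa using hprod), ← prod_tPow]
  refine ((IsPalindromicWord.isProdOfPalindromes ?_).mul (hPs.map lamp hlamp)).mul
    (IsPalindromicWord.isProdOfPalindromes ?_) |>.mul
    (isPalindromicWord_tPow A (M - 1)).isProdOfPalindromes
  · exact (hP.map lamp hlamp).wrap (isWordOver_lampWord (isWordOver_chainEven hwA))
  · exact (isPalindromicWord_t A).wrap (isWordOver_lampWord (isWordOver_chainOdd hwA))

end WrZ

theorem pal_width_wreath_Z {G : Type*} [Group G] (A : Set G) (k : ℕ)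
    (hgen : Subgroup.closure A = ⊤)
    (hA : ∀ g : G, IsProdOfPalindromes A k g) :
    ∀ w ∈ Subgroup.closure
        ({w : WrZ G | ∃ a ∈ A, w = ⟨delta a, 1⟩} ∪
          {(⟨1, Multiplicative.ofAdd 1⟩ : WrZ G)}),
      IsProdOfPalindromes
        ({w : WrZ G | ∃ a ∈ A, w = ⟨delta a, 1⟩} ∪
          {(⟨1, Multiplicative.ofAdd 1⟩ : WrZ G)}) (2 + k) w := by
  intro g hg
  change IsProdOfPalindromes (WrZ.gens A) (2 + k) g
  obtain ⟨N, hN⟩ := WrZ.closure_gens_le_boundedSupport A hg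
  rw [← inl_left_mul_inr_right g, ← ofAdd_toAdd g.right, WrZ.inr_ofAdd]
  rcases k with _ | k
  · have hleft : g.left = 1 := funext fun x => (hA _).eq_one_of_zero
    rw [hleft, map_one inl, one_mul, ← WrZ.prod_tPow, ← mul_one (WrZ.tPow _).prod]
    exact (WrZ.isPalindromicWord_tPow A _).isProdOfPalindromes.mul (isProdOfPalindromes_one 1)
  · rw [show 2 + (k + 1) = 1 + k + 1 + 1 by omega]
    exact WrZ.isProdOfPalindromes_inl_mul_t_zpow hgen hA hN _
end

section
/- In the lamplighter group L = ℤ ≀ ℤ with standard generators a and t, every element of L is a product of 3 palindromes over {a, t}, and there exists an element of L that is not a product of 2 palindromes over {a, t}; that is, the palindromic width of ℤ ≀ ℤ with respect to {a, t} is exactly 3. -/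
/-- The shift automorphism of `⨁_ℤ ℤ` (written multiplicatively): `(n • f) x = f (x - n)`. -/
noncomputable def lampShiftAut (n : ℤ) : Multiplicative (ℤ →₀ ℤ) ≃* Multiplicative (ℤ →₀ ℤ) :=
  AddEquiv.toMultiplicative (Finsupp.domCongr (Equiv.addRight n))

lemma lampShiftAut_apply (n : ℤ) (f : Multiplicative (ℤ →₀ ℤ)) (x : ℤ) :
    Multiplicative.toAdd (lampShiftAut n f) x = Multiplicative.toAdd f (x - n) := by
  simp [lampShiftAut, Finsupp.domCongr_apply, sub_eq_add_neg]

/-- `ℤ` acting on `⨁_ℤ ℤ` by shifts. -/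
noncomputable def lampShift : Multiplicative ℤ →* MulAut (Multiplicative (ℤ →₀ ℤ)) where
  toFun n := lampShiftAut n.toAdd
  map_one' := by
    refine MulEquiv.ext fun f => ?_
    apply (Multiplicative.toAdd).injective
    refine Finsupp.ext fun x => ?_
    rw [MulAut.one_apply, lampShiftAut_apply]
    norm_num
  map_mul' m n := by
    refine MulEquiv.ext fun f => ?_
    apply (Multiplicative.toAdd).injective
    refine Finsupp.ext fun x => ?_
    rw [MulAut.mul_apply, lampShiftAut_apply, lampShiftAut_apply, lampShiftAut_apply,
      toAdd_mul]
    ring_nf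

/-- The lamplighter group `ℤ ≀ ℤ = (⨁_ℤ ℤ) ⋊ ℤ`. -/
abbrev Lamplighter := Multiplicative (ℤ →₀ ℤ) ⋊[lampShift] Multiplicative ℤ

/-- The standard generator `a = (Δ₁, 0)` of `ℤ ≀ ℤ`. -/
noncomputable def genA : Lamplighter := ⟨Multiplicative.ofAdd (Finsupp.single 0 1), 1⟩

/-- The standard generator `t = (0, 1)` of `ℤ ≀ ℤ`. -/
noncomputable def genT : Lamplighter := ⟨1, Multiplicative.ofAdd 1⟩

/-!
Reading a word backwards induces the anti-automorphism `rev : (f, n) ↦ (x ↦ f (n - x), n)` of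
`ℤ ≀ ℤ`, which fixes `a` and `t`. The palindromic elements are exactly its fixed points, the
`(f, n)` with `f` mirror-symmetric about `n / 2`: such an element is `u m ũ` where `u` evaluates to
the part of `f` beyond `n / 2`, `ũ` is `u` reversed, and the palindrome `m` is a power of `a`
(the middle lamp) if `n` is even and `t` if `n` is odd.

Three palindromes suffice because every finitely supported `f` is the sum of a function `f₀`
symmetric about `0` and a function `f₁` symmetric about `1 / 2`, so that
`(f, n) = (f₀, 0) (f₁, 1) (0, n - 1)`. Two do not: if `p` and `q` are palindromic and `pq` has
cursor `0`, then the lamps of `pq` are symmetric about `pos p / 2`, and lamps lit at `0, 1, 3`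
are symmetric about no point.
-/

section General

variable {G : Type*} [Group G] {X : Set G}

theorem isProdOfPalindromes_zero : IsProdOfPalindromes X 0 1 :=
  ⟨[], rfl, by simp, rfl⟩

theorem IsProdOfPalindromes.palindrome_mul {n : ℕ} {g : G} {w : List G}
    (hw : IsPalindromicWord X w) (hg : IsProdOfPalindromes X n g) :
    IsProdOfPalindromes X (n + 1) (w.prod * g) := by
  obtain ⟨ws, hlen, hpal, rfl⟩ := hg
  refine ⟨w :: ws, by simp [hlen], ?_, by simp⟩
  simpa [List.forall_mem_cons] using ⟨hw, hpal⟩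

theorem isPalindromicWord_zpow {x : G} (hx : x ∈ X) (n : ℤ) :
    ∃ w, IsPalindromicWord X w ∧ w.prod = x ^ n := by
  cases n with
  | ofNat m =>
    refine ⟨List.replicate m x, ⟨fun y hy => ?_, List.reverse_replicate⟩, by simp⟩
    rw [List.eq_of_mem_replicate hy]
    exact Or.inl hx
  | negSucc m =>
    refine ⟨List.replicate (m + 1) x⁻¹, ⟨fun y hy => ?_, List.reverse_replicate⟩,
      by simp⟩
    rw [List.eq_of_mem_replicate hy, inv_inv]
    exact Or.inr hx

theorem IsPalindromicWord.append_append_reverse {u m : List G}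
    (hu : ∀ x ∈ u, x ∈ X ∨ x⁻¹ ∈ X) (hm : IsPalindromicWord X m) :
    IsPalindromicWord X (u ++ m ++ u.reverse) := by
  refine ⟨fun x hx => ?_, by simp [hm.2]⟩
  simp only [List.mem_append, List.mem_reverse] at hx
  rcases hx with (hx | hx) | hx
  exacts [hu x hx, hm.1 x hx, hu x hx]

theorem List.prod_reverse_eq_unop {σ : G →* Gᵐᵒᵖ} (hσ : ∀ x ∈ X, (σ x).unop = x)
    {w : List G} (hw : ∀ x ∈ w, x ∈ X ∨ x⁻¹ ∈ X) :
    w.reverse.prod = (σ w.prod).unop := by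
  rw [unop_map_list_prod]
  congr 2
  refine ((List.map_congr_left fun x hx => ?_).trans (List.map_id w)).symm
  rcases hw x hx with h | h
  · exact hσ x h
  · simpa using congrArg (·⁻¹) (hσ x⁻¹ h)

theorem IsPalindromicWord.unop_prod {σ : G →* Gᵐᵒᵖ} (hσ : ∀ x ∈ X, (σ x).unop = x)
    {w : List G} (hw : IsPalindromicWord X w) : (σ w.prod).unop = w.prod := by
  rw [← List.prod_reverse_eq_unop hσ hw.1, hw.2]

theorem exists_word_prod_eq_of_closure_eq_top (hX : Subgroup.closure X = ⊤) (g : G) :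
    ∃ u : List G, (∀ x ∈ u, x ∈ X ∨ x⁻¹ ∈ X) ∧ u.prod = g := by
  have hg : g ∈ (Subgroup.closure X).toSubmonoid := by simp [hX]
  rw [Subgroup.closure_toSubmonoid] at hg
  simpa only [Set.mem_union, Set.mem_inv] using Submonoid.exists_list_of_mem_closure hg

end General

/-- Functions `ℤ →₀ M` whose graph is mirror-symmetric about the point `k / 2`. -/
def symmetricAbout (M : Type*) [AddCommGroup M] (k : ℤ) : AddSubgroup (ℤ →₀ M) where
  carrier := {f | ∀ x, f (k - x) = f x}
  zero_mem' _ := rfl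
  add_mem' hf hg x := by simp [hf x, hg x]
  neg_mem' hf x := by simp [hf x]

section Symmetric

variable {M : Type*} [AddCommGroup M]

theorem single_add_single_mem_symmetricAbout (k p : ℤ) (c : M) :
    Finsupp.single p c + Finsupp.single (k - p) c ∈ symmetricAbout M k := by
  intro x
  simp only [Finsupp.add_apply, Finsupp.single_apply]
  rw [add_comm]
  congr 2 <;> simp only [eq_iff_iff] <;> omega

theorem single_sub_mem_of_symmetricAbout_le {S : AddSubgroup (ℤ →₀ M)} {k p : ℤ} {c : M}
    (hk : symmetricAbout M k ≤ S) (hp : Finsupp.single p c ∈ S) :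
    Finsupp.single (k - p) c ∈ S := by
  rw [← add_sub_cancel_left (Finsupp.single p c) (Finsupp.single (k - p) c)]
  exact sub_mem (hk (single_add_single_mem_symmetricAbout k p c)) hp

theorem symmetricAbout_zero_sup_symmetricAbout_one :
    symmetricAbout M 0 ⊔ symmetricAbout M 1 = ⊤ := by
  set S := symmetricAbout M 0 ⊔ symmetricAbout M 1
  have h0 : symmetricAbout M 0 ≤ S := le_sup_left
  have h1 : symmetricAbout M 1 ≤ S := le_sup_right
  have hsingle (p : ℤ) (c : M) : Finsupp.single p c ∈ S := by
    -- the reflections `p ↦ -p` and `p ↦ 1 - p` compose to the translation `p ↦ p + 1`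
    induction p using Int.induction_on generalizing c with
    | zero =>
      refine h0 fun x => ?_
      simp [Finsupp.single_apply, eq_comm]
    | succ p ih =>
      simpa [add_comm] using
        single_sub_mem_of_symmetricAbout_le h1 (single_sub_mem_of_symmetricAbout_le h0 (ih c))
    | pred p ih =>
      simpa [sub_eq_add_neg] using
        single_sub_mem_of_symmetricAbout_le h0 (single_sub_mem_of_symmetricAbout_le h1 (ih c))
  refine (AddSubgroup.eq_top_iff' S).2 fun f => ?_
  induction f using Finsupp.induction with
  | zero => exact zero_mem S
  | single_add p c f _ _ ih => exact add_mem (hsingle p c) ih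

end Symmetric

namespace Lamplighter

open Multiplicative MulOpposite

def lamps (g : Lamplighter) : ℤ →₀ ℤ := toAdd g.left

def pos (g : Lamplighter) : ℤ := toAdd g.right

noncomputable def mk (f : ℤ →₀ ℤ) (n : ℤ) : Lamplighter := ⟨ofAdd f, ofAdd n⟩

@[simp] theorem lamps_mk (f : ℤ →₀ ℤ) (n : ℤ) : (mk f n).lamps = f := rfl

@[simp] theorem pos_mk (f : ℤ →₀ ℤ) (n : ℤ) : (mk f n).pos = n := rfl

@[simp] theorem mk_lamps_pos (g : Lamplighter) : mk g.lamps g.pos = g := rfl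

@[ext] theorem ext {g h : Lamplighter} (hl : ∀ x, g.lamps x = h.lamps x) (hp : g.pos = h.pos) :
    g = h :=
  SemidirectProduct.ext (toAdd.injective (Finsupp.ext hl)) (toAdd.injective hp)

@[simp] theorem lamps_mul_apply (g h : Lamplighter) (x : ℤ) :
    (g * h).lamps x = g.lamps x + h.lamps (x - g.pos) := by
  simp [lamps, pos, lampShift, lampShiftAut_apply]

@[simp] theorem pos_mul (g h : Lamplighter) : (g * h).pos = g.pos + h.pos := rfl

theorem genA_eq_mk : genA = mk (Finsupp.single 0 1) 0 := rfl

theorem genA_zpow (c : ℤ) : genA ^ c = mk (Finsupp.single 0 c) 0 := by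
  have : genA = SemidirectProduct.inl (ofAdd (Finsupp.single 0 1)) := rfl
  rw [this, ← map_zpow, ← ofAdd_zsmul, Finsupp.smul_single_one]
  rfl

theorem genT_zpow (n : ℤ) : genT ^ n = mk 0 n := by
  have : genT = SemidirectProduct.inr (ofAdd 1) := rfl
  rw [this, ← map_zpow, ← ofAdd_zsmul, zsmul_one]
  rfl

theorem mk_add (f f' : ℤ →₀ ℤ) (n : ℤ) : mk (f + f') n = mk f 0 * mk f' n := by
  ext x <;> simp

theorem mk_single (p c : ℤ) : mk (Finsupp.single p c) 0 = genT ^ p * genA ^ c * genT ^ (-p) := by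
  rw [genT_zpow, genT_zpow, genA_zpow]
  ext x <;> simp [Finsupp.single_apply, sub_eq_zero, eq_comm]

theorem closure_genA_genT : Subgroup.closure {genA, genT} = ⊤ := by
  have hA : genA ∈ Subgroup.closure {genA, genT} := Subgroup.subset_closure (by simp)
  have hT : genT ∈ Subgroup.closure {genA, genT} := Subgroup.subset_closure (by simp)
  suffices ∀ f n, mk f n ∈ Subgroup.closure {genA, genT} from
    eq_top_iff.2 fun g _ => mk_lamps_pos g ▸ this g.lamps g.pos
  intro f n
  induction f using Finsupp.induction with
  | zero => simpa [genT_zpow] using zpow_mem hT n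
  | single_add p c f _ _ ih =>
    rw [mk_add, mk_single]
    exact mul_mem (mul_mem (mul_mem (zpow_mem hT _) (zpow_mem hA _)) (zpow_mem hT _)) ih

noncomputable def rev : Lamplighter →* Lamplighterᵐᵒᵖ where
  toFun g := op (mk (Finsupp.domCongr (Equiv.subLeft g.pos) g.lamps) g.pos)
  map_one' := rfl
  map_mul' g h := by
    apply unop_injective
    ext x
    · simp only [unop_op, unop_mul, pos_mul, Finsupp.domCongr_apply, lamps_mk,
        Finsupp.equivMapDomain_apply, Equiv.subLeft_symm_apply, lamps_mul_apply, pos_mk, neg_sub]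
      ring_nf
    · simp [add_comm]

@[simp] theorem lamps_unop_rev_apply (g : Lamplighter) (x : ℤ) :
    (rev g).unop.lamps x = g.lamps (g.pos - x) := by
  simp [rev, Finsupp.domCongr_apply, neg_add_eq_sub]

@[simp] theorem pos_unop_rev (g : Lamplighter) : (rev g).unop.pos = g.pos := rfl

theorem unop_rev_eq_self_iff {g : Lamplighter} :
    (rev g).unop = g ↔ g.lamps ∈ symmetricAbout ℤ g.pos := by
  refine ⟨fun h x => ?_, fun h => ext (fun x => by simp [h x]) rfl⟩
  rw [← lamps_unop_rev_apply, h]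

theorem unop_rev_of_mem_generators {x : Lamplighter} (hx : x ∈ ({genA, genT} : Set Lamplighter)) :
    (rev x).unop = x := by
  rcases hx with rfl | rfl
  · ext y
    · simp [genA_eq_mk, Finsupp.single_apply, eq_comm]
    · rfl
  · rfl

theorem exists_isPalindromicWord_prod_eq_mk {f : ℤ →₀ ℤ} {n : ℤ}
    (hf : f ∈ symmetricAbout ℤ n) :
    ∃ w, IsPalindromicWord {genA, genT} w ∧ w.prod = mk f n := by
  obtain ⟨k, hk⟩ := Int.even_or_odd' n
  obtain ⟨m, hm, hm_prod⟩ : ∃ m, IsPalindromicWord {genA, genT} m ∧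
      m.prod = mk (Finsupp.single 0 (if n = 2 * k then f k else 0)) (n - 2 * k) := by
    rcases hk with rfl | rfl
    · simpa [genA_zpow] using
        isPalindromicWord_zpow (X := {genA, genT}) (x := genA) (by simp) (f k)
    · obtain ⟨m, hm, hm_prod⟩ :=
        isPalindromicWord_zpow (X := {genA, genT}) (x := genT) (by simp) 1
      exact ⟨m, hm, by rw [hm_prod, genT_zpow]; simp⟩
  classical
  obtain ⟨u, hu, hu_prod⟩ := exists_word_prod_eq_of_closure_eq_top closure_genA_genT
    (mk (f.filter fun x => n < 2 * x) k)
  refine ⟨u ++ m ++ u.reverse, hm.append_append_reverse hu, ?_⟩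
  rw [List.prod_append, List.prod_append,
    List.prod_reverse_eq_unop (fun x hx => unop_rev_of_mem_generators hx) hu,
    hu_prod, hm_prod]
  ext x
  · have hfx := hf x
    simp only [lamps_mul_apply, lamps_unop_rev_apply, lamps_mk, pos_mul, pos_mk,
      Finsupp.filter_apply, Finsupp.single_apply]
    rw [show k - (x - (k + (n - 2 * k))) = n - x by ring]
    split_ifs <;> grind
  · simp only [pos_mul, pos_unop_rev, pos_mk]
    ring

theorem exists_isPalindromicWord_prod_eq_iff (g : Lamplighter) :
    (∃ w, IsPalindromicWord {genA, genT} w ∧ w.prod = g) ↔ (rev g).unop = g := by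
  refine ⟨?_, fun hg => ?_⟩
  · rintro ⟨w, hw, rfl⟩
    exact hw.unop_prod fun x hx => unop_rev_of_mem_generators hx
  · simpa using exists_isPalindromicWord_prod_eq_mk (unop_rev_eq_self_iff.1 hg)

theorem isProdOfPalindromes_three (g : Lamplighter) : IsProdOfPalindromes {genA, genT} 3 g := by
  have hg : g.lamps ∈ symmetricAbout ℤ 0 ⊔ symmetricAbout ℤ 1 := by
    rw [symmetricAbout_zero_sup_symmetricAbout_one]
    trivial
  obtain ⟨f₀, hf₀, f₁, hf₁, hsum⟩ := AddSubgroup.mem_sup.1 hg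
  obtain ⟨w₀, hw₀, h₀⟩ := exists_isPalindromicWord_prod_eq_mk hf₀
  obtain ⟨w₁, hw₁, h₁⟩ := exists_isPalindromicWord_prod_eq_mk hf₁
  obtain ⟨w₂, hw₂, h₂⟩ :=
    exists_isPalindromicWord_prod_eq_mk (zero_mem (symmetricAbout ℤ (g.pos - 1)))
  have hprod : g = w₀.prod * (w₁.prod * (w₂.prod * 1)) := by
    rw [h₀, h₁, h₂]
    ext x <;> simp [← hsum]
  rw [hprod]
  exact .palindrome_mul hw₀ <| .palindrome_mul hw₁ <|
    .palindrome_mul hw₂ isProdOfPalindromes_zero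

theorem lamps_mul_mem_symmetricAbout {p q : Lamplighter} (hp : (rev p).unop = p)
    (hq : (rev q).unop = q) (hpq : (p * q).pos = 0) :
    (p * q).lamps ∈ symmetricAbout ℤ p.pos := by
  rw [unop_rev_eq_self_iff] at hp hq
  intro x
  have hqx := hq (x - p.pos)
  simp only [pos_mul] at hpq
  simp only [lamps_mul_apply, hp x]
  rw [← hqx]
  congr 2
  omega

theorem exists_mem_symmetricAbout_of_isProdOfPalindromes_two {g : Lamplighter}
    (h : IsProdOfPalindromes {genA, genT} 2 g) (hg : g.pos = 0) :
    ∃ k, g.lamps ∈ symmetricAbout ℤ k := by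
  obtain ⟨ws, hlen, hpal, rfl⟩ := h
  obtain ⟨w₁, w₂, rfl⟩ := List.length_eq_two.1 hlen
  have hrev (w) (hw : w ∈ [w₁, w₂]) : (rev w.prod).unop = w.prod :=
    (exists_isPalindromicWord_prod_eq_iff _).1 ⟨w, hpal w hw, rfl⟩
  simp only [List.map_cons, List.map_nil, List.prod_cons, List.prod_nil, mul_one] at hg ⊢
  exact ⟨_, lamps_mul_mem_symmetricAbout (hrev w₁ (by simp)) (hrev w₂ (by simp)) hg⟩

theorem not_isProdOfPalindromes_two :
    ¬ IsProdOfPalindromes {genA, genT} 2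
      (mk (Finsupp.single 0 1 + Finsupp.single 1 1 + Finsupp.single 3 1) 0) := by
  intro h
  obtain ⟨k, hk⟩ := exists_mem_symmetricAbout_of_isProdOfPalindromes_two h (pos_mk _ _)
  have hlit (x : ℤ) (hx : x = 0 ∨ x = 1 ∨ x = 3) : k - x = 0 ∨ k - x = 1 ∨ k - x = 3 := by
    have hkx := hk x
    simp only [lamps_mk, Finsupp.add_apply, Finsupp.single_apply] at hkx
    split_ifs at hkx <;> omega
  have := hlit 0 (by omega)
  have := hlit 1 (by omega)
  have := hlit 3 (by omega)
  omega

end Lamplighter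

theorem lamplighter_palindromic_width_eq_three :
    (∀ g : Lamplighter, IsProdOfPalindromes {genA, genT} 3 g) ∧
    (∃ g : Lamplighter, ¬ IsProdOfPalindromes {genA, genT} 2 g) :=
  ⟨Lamplighter.isProdOfPalindromes_three, _, Lamplighter.not_isProdOfPalindromes_two⟩
end

section
/- Let f : ℤ → ℤ have support exactly {0, 1} with f(0) ≠ f(1). Then there do not exist integers p, q with p + q = 3 together with finitely supported functions g, h : ℤ → ℤ satisfying g(x) = g(p − x) for all x ∈ ℤ, h(x) = h(q − x) for all x ∈ ℤ, and f(x) = g(x) + h(x − p) for all x ∈ ℤ. -/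
/-!
Combining the two symmetries with `f x = g x + h (x - p)` gives
`f x - f (p + 3 - x) = g x - g (x - 3)`. Summed over a residue class mod 3, the right-hand side
telescopes to zero because `g` is finitely supported, so the class sums `S r` of `f` satisfy
`S r = S (p - r)` for all `r : ZMod 3`. As `f` is supported on `{0, 1}`, `S = (f 0, f 1, 0)`, and
the three possible values of `p mod 3` force `f 1 = 0`, `f 0 = f 1` or `f 0 = 0` respectively.
-/

open Function

section ResidueSum

variable {M : Type*} [AddCommGroup M]

noncomputable def residueSum (n : ℕ) (φ : ℤ → M) (r : ZMod n) : M :=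
  ∑ᶠ x ∈ {x : ℤ | (x : ZMod n) = r}, φ x

theorem residueSum_sub {n : ℕ} {φ ψ : ℤ → M} (hφ : (support φ).Finite)
    (hψ : (support ψ).Finite) (r : ZMod n) :
    residueSum n (fun x ↦ φ x - ψ x) r = residueSum n φ r - residueSum n ψ r := by
  simp only [residueSum, finsum_mem_def, Set.indicator_sub]
  refine finsum_sub_distrib ?_ ?_ <;> rw [HasFiniteSupport, Set.support_indicator]
  exacts [hφ.inter_of_right _, hψ.inter_of_right _]

theorem residueSum_comp_sub_right (n : ℕ) (φ : ℤ → M) (a : ℤ) (r : ZMod n) :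
    residueSum n (fun x ↦ φ (x - a)) r = residueSum n φ (r - a) := by
  refine finsum_mem_eq_of_bijOn (· - a)
    ⟨fun x hx ↦ ?_, sub_left_injective.injOn, fun y hy ↦ ⟨y + a, ?_, ?_⟩⟩ fun _ _ ↦ rfl
  all_goals simp_all

theorem residueSum_comp_sub_left (n : ℕ) (φ : ℤ → M) (c : ℤ) (r : ZMod n) :
    residueSum n (fun x ↦ φ (c - x)) r = residueSum n φ (c - r) := by
  refine finsum_mem_eq_of_bijOn (c - ·)
    ⟨fun x hx ↦ ?_, sub_right_injective.injOn, fun y hy ↦ ⟨c - y, ?_, ?_⟩⟩ fun _ _ ↦ rfl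
  all_goals simp_all

theorem residueSum_eq_sum_filter {n : ℕ} {φ : ℤ → M} {s : Finset ℤ} (h : support φ ⊆ s)
    (r : ZMod n) : residueSum n φ r = ∑ x ∈ s.filter (fun x : ℤ ↦ (x : ZMod n) = r), φ x := by
  apply finsum_mem_eq_sum_of_inter_support_eq
  ext x
  constructor
  · rintro ⟨hx, hφ⟩
    exact ⟨Finset.mem_filter.mpr ⟨h hφ, hx⟩, hφ⟩
  · rintro ⟨hx, hφ⟩
    exact ⟨(Finset.mem_filter.mp hx).2, hφ⟩

theorem residueSum_eq_residueSum_reflect {n : ℕ} {c : ℤ} {f g : ℤ → M}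
    (hf : (support f).Finite) (hg : (support g).Finite)
    (hfg : ∀ x, f x - f (c - x) = g x - g (x - n)) (r : ZMod n) :
    residueSum n f r = residueSum n f (c - r) := by
  have := congrArg (residueSum n · r) (funext hfg)
  rwa [residueSum_sub hf (hf.preimage sub_right_injective.injOn),
    residueSum_sub hg (hg.preimage sub_left_injective.injOn), residueSum_comp_sub_left,
    residueSum_comp_sub_right, Int.cast_natCast, ZMod.natCast_self, sub_zero, sub_self,
    sub_eq_zero] at this

end ResidueSum

theorem sub_apply_reflect_eq_sub_apply_shift {G M : Type*} [AddCommGroup G] [AddCommGroup M]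
    {f g h : G → M} {p q : G} (hg : ∀ x, g x = g (p - x)) (hh : ∀ x, h x = h (q - x))
    (hf : ∀ x, f x = g x + h (x - p)) (x : G) :
    f x - f (p + (p + q) - x) = g x - g (x - (p + q)) := by
  rw [hf, hf, hg (p + (p + q) - x), hh (p + (p + q) - x - p)]
  abel_nf

theorem no_two_symmetric_decomposition (f : ℤ → ℤ)
    (hsupp : Function.support f = {0, 1}) (hne : f 0 ≠ f 1) :
    ¬ ∃ (p q : ℤ) (g h : ℤ → ℤ), p + q = 3 ∧
      (Function.support g).Finite ∧ (Function.support h).Finite ∧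
      (∀ x : ℤ, g x = g (p - x)) ∧ (∀ x : ℤ, h x = h (q - x)) ∧
      (∀ x : ℤ, f x = g x + h (x - p)) := by
  rintro ⟨p, q, g, h, hpq, hg, -, hgs, hhs, hf⟩
  have key : ∀ x, f x - f (p + 3 - x) = g x - g (x - (3 : ℕ)) := by
    simpa [hpq] using sub_apply_reflect_eq_sub_apply_shift hgs hhs hf
  have balance := residueSum_eq_residueSum_reflect (hsupp ▸ Set.toFinite _) hg key
  have hS := residueSum_eq_sum_filter (n := 3) (φ := f) (s := {0, 1}) (by simp [hsupp])
  simp only [hS, Finset.filter_insert, Finset.filter_singleton] at balance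
  have hf0 : f 0 ≠ 0 := mem_support.mp (by simp [hsupp])
  have hf1 : f 1 ≠ 0 := mem_support.mp (by simp [hsupp])
  generalize ((p + 3 : ℤ) : ZMod 3) = t at balance
  fin_cases t
  · exact hf1 (by simpa +decide using balance 1)
  · exact hne (by simpa +decide using balance 0)
  · exact hf0 (by simpa +decide using balance 0)
end

section
/- Let G be a group, A ⊆ G, and r ≥ 1. Suppose f : ℤ^r → Words(A) is finitely supported (f(x) is the empty word for all but finitely many x). Then there exist γ ∈ G and finitely supported functions f₀, f₁, …, f_r : ℤ^r → Words(A) such that: (i) for every x ∈ ℤ^r, eval(f(x)) = δ(x) · eval(f₀(x)) · eval(f₁(x)) ⋯ eval(f_r(x)) in G, where δ(0) = γ and δ(x) = 1 for x ≠ 0; (ii) f₀(x) equals the reverse of f₀(−x) for all x ∈ ℤ^r; and (iii) for each i = 1,…,r, f_i(x) equals the reverse of f_i(e_i − x) for all x ∈ ℤ^r, where e_i is the i-th standard basis vector of ℤ^r. -/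
/-!
Induct on `r`, clearing the last coordinate; write `π x` for it and `e` for the last basis vector.
For `π x > 0` let `T x` collect the letters of `f` along the ray `x + e, x + 2e, …`, together with
the inverted letters met along `-x, -x - e, …`, and put `f₀ x := T x⁻¹` and `f_r x := T x · f x`,
so that `f x = f₀ x · f_r x` there. The two symmetries force the values of `f₀` and `f_r` on
`π x ≤ 0`, and the equation survives for `π x < 0` because `T` telescopes:
`T x = f (-x)⁻¹ · T (x + e) · f (x + e)`. What is left is `f x · (f_r x)⁻¹` on the hyperplane
`π x = 0`, which is handled by induction; for `r = 0` it is all absorbed into `γ`.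
-/

namespace SymmetricWordDecomposition

variable {G : Type*} [Group G]

def IsWord (A : Set G) (w : List G) : Prop := ∀ a ∈ w, a ∈ A ∨ a⁻¹ ∈ A

def wordInv (w : List G) : List G := (w.map (·⁻¹)).reverse

lemma prod_wordInv (w : List G) : (wordInv w).prod = w.prod⁻¹ :=
  (List.prod_inv_reverse w).symm

lemma prod_map_inv (w : List G) : (w.map (·⁻¹)).prod = w.reverse.prod⁻¹ := by
  rw [List.prod_reverse_noncomm, inv_inv]

namespace IsWord

variable {A : Set G} {u v : List G}

lemma nil : IsWord A ([] : List G) := fun _ h => absurd h List.not_mem_nil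

lemma append (hu : IsWord A u) (hv : IsWord A v) : IsWord A (u ++ v) := by
  intro a ha
  rcases List.mem_append.1 ha with h | h
  exacts [hu a h, hv a h]

lemma reverse (hu : IsWord A u) : IsWord A u.reverse :=
  fun a ha => hu a (List.mem_reverse.1 ha)

lemma map_inv (hu : IsWord A u) : IsWord A (u.map (·⁻¹)) := by
  intro _ hmem
  obtain ⟨a, ha, rfl⟩ := List.mem_map.1 hmem
  rw [inv_inv]
  exact (hu a ha).symm

lemma wordInv (hu : IsWord A u) : IsWord A (wordInv u) :=
  hu.map_inv.reverse

end IsWord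

section Line

variable {V : Type*} [AddCommGroup V] (π : V →+ ℤ) (e : V) (f : V → List G) (n : ℕ)

/-- The fuel truncates the ray `x + e, x + 2e, …`; it is irrelevant once it exceeds `|π|` on the
support of `f`. -/
def rayWord : ℕ → V → List G
  | 0, _ => []
  | m + 1, x => (f (-x)).map (·⁻¹) ++ rayWord m (x + e) ++ f (x + e)

def antipodalPart (x : V) : List G :=
  if 0 < π x then wordInv (rayWord e f n x)
  else if π x < 0 then (rayWord e f n (-x)).map (·⁻¹) else []

def reflectionPart (x : V) : List G :=
  if 0 < π x then rayWord e f n x ++ f x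
  else (rayWord e f n (e - x) ++ f (e - x)).reverse

lemma antipodalPart_eq_reverse (x : V) :
    antipodalPart π e f n x = (antipodalPart π e f n (-x)).reverse := by
  unfold antipodalPart
  rcases lt_trichotomy (π x) 0 with h | h | h
  · simp [h, h.not_gt, wordInv]
  · simp [h]
  · simp [h, h.not_gt, wordInv]

variable {π e} in
lemma reflectionPart_eq_reverse (he : π e = 1) (x : V) :
    reflectionPart π e f n x = (reflectionPart π e f n (e - x)).reverse := by
  unfold reflectionPart
  by_cases h : 0 < π x
  · have h' : ¬ 0 < π (e - x) := by simp only [map_sub, he]; omega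
    rw [if_pos h, if_neg h', sub_sub_cancel, List.reverse_reverse]
  · have h' : 0 < π (e - x) := by simp only [map_sub, he]; omega
    rw [if_neg h, if_pos h']

variable {π e f n}

lemma rayWord_succ_eq (he : π e = 1) (hn : ∀ x, f x ≠ [] → (π x).natAbs < n)
    {m : ℕ} {y : V} (hy : n ≤ π y + m) : rayWord e f (m + 1) y = rayWord e f m y := by
  have hnil : ∀ x, n ≤ (π x).natAbs → f x = [] :=
    fun x hx => by_contra fun h => (hn x h).not_ge hx
  induction m generalizing y with
  | zero =>
    rw [rayWord, rayWord, hnil (-y) (by simp only [map_neg]; omega),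
      hnil (y + e) (by simp only [map_add, he]; omega)]
    rfl
  | succ m ih =>
    rw [rayWord, ih (by simp only [map_add, he]; omega)]
    rfl

lemma rayWord_eq_of_nonneg (he : π e = 1) (hn : ∀ x, f x ≠ [] → (π x).natAbs < n)
    {x : V} (hx : 0 ≤ π x) :
    rayWord e f n x = (f (-x)).map (·⁻¹) ++ rayWord e f n (x + e) ++ f (x + e) := by
  cases n with
  | zero =>
    have hnil : ∀ y, f y = [] := fun y => by_contra fun h => Nat.not_lt_zero _ (hn y h)
    simp [rayWord, hnil]
  | succ m => rw [rayWord, rayWord_succ_eq he hn (by simp only [map_add, he]; omega)]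

lemma prod_eq_antipodalPart_mul_reflectionPart (he : π e = 1)
    (hn : ∀ x, f x ≠ [] → (π x).natAbs < n) {x : V} (hx : π x ≠ 0) :
    (f x).prod = (antipodalPart π e f n x).prod * (reflectionPart π e f n x).prod := by
  rcases hx.lt_or_gt with hneg | hpos
  · have hx' : 0 ≤ π (-x) := by simp only [map_neg]; omega
    simp only [antipodalPart, reflectionPart, hneg, hneg.not_gt, if_false, if_true,
      rayWord_eq_of_nonneg he hn hx', neg_neg, sub_eq_neg_add]
    simp only [List.append_assoc, List.map_append, List.map_map, inv_involutive,
      Function.Involutive.comp_self, List.map_id_fun, id_eq, List.prod_append, prod_map_inv,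
      List.reverse_append]
    group
  · simp [antipodalPart, reflectionPart, hpos, prod_wordInv]

variable (e) in
lemma finite_rayWord (hf : {x | f x ≠ []}.Finite) (m : ℕ) :
    {x | rayWord e f m x ≠ []}.Finite := by
  induction m with
  | zero => simp [rayWord]
  | succ m ih =>
    refine ((hf.preimage neg_injective.injOn).union
      ((ih.union hf).preimage (add_left_injective e).injOn)).subset fun x hx => ?_
    simp only [rayWord, Set.mem_ofPred_eq, ne_eq, List.append_eq_nil_iff, List.map_eq_nil_iff,
      not_and_or] at hx
    simp only [Set.mem_union, Set.mem_preimage, Set.mem_ofPred_eq]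
    tauto

lemma finite_antipodalPart (hf : {x | f x ≠ []}.Finite) :
    {x | antipodalPart π e f n x ≠ []}.Finite := by
  have hray := finite_rayWord e hf n
  refine (hray.union (hray.preimage neg_injective.injOn)).subset fun x hx => ?_
  simp only [antipodalPart, Set.mem_ofPred_eq] at hx
  simp only [Set.mem_union, Set.mem_preimage, Set.mem_ofPred_eq]
  split_ifs at hx
  · exact .inl fun h => hx (by rw [h]; rfl)
  · exact .inr fun h => hx (by rw [h]; rfl)
  · exact absurd rfl hx

lemma finite_reflectionPart (hf : {x | f x ≠ []}.Finite) :
    {x | reflectionPart π e f n x ≠ []}.Finite := by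
  have hray := (finite_rayWord e hf n).union hf
  refine (hray.union (hray.preimage (sub_right_injective (b := e)).injOn)).subset fun x hx => ?_
  simp only [reflectionPart, Set.mem_ofPred_eq] at hx
  simp only [Set.mem_union, Set.mem_preimage, Set.mem_ofPred_eq]
  split_ifs at hx <;>
    simp only [ne_eq, List.reverse_eq_nil_iff, List.append_eq_nil_iff, not_and_or] at hx <;> tauto

variable {A : Set G} (hA : ∀ x, IsWord A (f x))
include hA

lemma isWord_rayWord (m : ℕ) (x : V) : IsWord A (rayWord e f m x) := by
  induction m generalizing x with
  | zero => exact .nil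
  | succ m ih => exact ((hA _).map_inv.append (ih _)).append (hA _)

lemma isWord_antipodalPart (x : V) : IsWord A (antipodalPart π e f n x) := by
  unfold antipodalPart
  split_ifs
  exacts [(isWord_rayWord hA n x).wordInv, (isWord_rayWord hA n _).map_inv, .nil]

lemma isWord_reflectionPart (x : V) : IsWord A (reflectionPart π e f n x) := by
  unfold reflectionPart
  split_ifs
  exacts [(isWord_rayWord hA n x).append (hA x), ((isWord_rayWord hA n _).append (hA _)).reverse]

theorem exists_antipodal_reflection_split (he : π e = 1) (hf : {x | f x ≠ []}.Finite) :
    ∃ g h : V → List G, {x | g x ≠ []}.Finite ∧ {x | h x ≠ []}.Finite ∧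
      (∀ x, IsWord A (g x)) ∧ (∀ x, IsWord A (h x)) ∧
      (∀ x, g x = (g (-x)).reverse) ∧ (∀ x, h x = (h (e - x)).reverse) ∧
      ∀ x, π x ≠ 0 → (f x).prod = (g x).prod * (h x).prod := by
  obtain ⟨N, hN⟩ := (hf.image fun x => (π x).natAbs).bddAbove
  have hn : ∀ x, f x ≠ [] → (π x).natAbs < N + 1 :=
    fun x hx => Nat.lt_succ_of_le (hN ⟨x, hx, rfl⟩)
  exact ⟨antipodalPart π e f (N + 1), reflectionPart π e f (N + 1), finite_antipodalPart hf,
    finite_reflectionPart hf, isWord_antipodalPart hA, isWord_reflectionPart hA,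
    antipodalPart_eq_reverse π e f _, reflectionPart_eq_reverse f _ he,
    fun _ hx => prod_eq_antipodalPart_mul_reflectionPart he hn hx⟩

end Line

section Hyperplane

variable {α : Type*} {n : ℕ} {g : (Fin n → ℤ) → List α} {h : (Fin (n + 1) → ℤ) → List α}

variable (g h) in
def hyperplaneCases (x : Fin (n + 1) → ℤ) : List α :=
  if x (Fin.last n) = 0 then g (Fin.init x) else h x

lemma finite_hyperplaneCases (hg : {y | g y ≠ []}.Finite) (hh : {x | h x ≠ []}.Finite) :
    {x | hyperplaneCases g h x ≠ []}.Finite := by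
  refine ((hg.image fun y => Fin.snoc y 0).union hh).subset fun x hx => ?_
  simp only [hyperplaneCases, Set.mem_ofPred_eq] at hx
  split_ifs at hx with h0
  · exact .inl ⟨Fin.init x, hx, by beta_reduce; rw [← h0, Fin.snoc_init_self]⟩
  · exact .inr hx

lemma isWord_hyperplaneCases {A : Set G} {g : (Fin n → ℤ) → List G}
    {h : (Fin (n + 1) → ℤ) → List G} (hg : ∀ y, IsWord A (g y))
    (hh : ∀ x, IsWord A (h x)) (x : Fin (n + 1) → ℤ) : IsWord A (hyperplaneCases g h x) := by
  unfold hyperplaneCases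
  split_ifs
  exacts [hg _, hh _]

lemma hyperplaneCases_eq_reverse {b : Fin (n + 1) → ℤ} (hb : b (Fin.last n) = 0)
    (hg : ∀ y, g y = (g (Fin.init b - y)).reverse) (hh : ∀ x, h x = (h (b - x)).reverse)
    (x : Fin (n + 1) → ℤ) : hyperplaneCases g h x = (hyperplaneCases g h (b - x)).reverse := by
  have hlast : (b - x) (Fin.last n) = 0 ↔ x (Fin.last n) = 0 := by simp [hb]
  unfold hyperplaneCases
  by_cases hx : x (Fin.last n) = 0
  · rw [if_pos hx, if_pos (hlast.2 hx)]
    exact hg _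
  · rw [if_neg hx, if_neg (mt hlast.1 hx)]
    exact hh x

lemma prod_ofFn_snoc_hyperplaneCases (fs : Fin n → (Fin n → ℤ) → List G)
    (h : (Fin (n + 1) → ℤ) → List G) (x : Fin (n + 1) → ℤ) :
    (List.ofFn fun i => (Fin.snoc (α := fun _ => (Fin (n + 1) → ℤ) → List G)
        (fun j => hyperplaneCases (fs j) fun _ => []) h i x).prod).prod =
      (if x (Fin.last n) = 0 then (List.ofFn fun j => (fs j (Fin.init x)).prod).prod else 1) *
        (h x).prod := by
  rw [List.ofFn_succ', List.prod_concat]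
  simp only [Fin.snoc_castSucc, Fin.snoc_last, hyperplaneCases]
  split_ifs <;> simp

lemma eq_zero_iff_init_eq_zero {x : Fin (n + 1) → ℤ} (hx : x (Fin.last n) = 0) :
    x = 0 ↔ Fin.init x = 0 := by
  simp only [funext_iff, Fin.forall_fin_succ', Pi.zero_apply, Fin.init, hx, and_true]

lemma init_single_castSucc (j : Fin n) (a : ℤ) :
    Fin.init (Pi.single j.castSucc a : Fin (n + 1) → ℤ) = Pi.single j a := by
  ext i
  simp [Fin.init, Pi.single_apply]

end Hyperplane

section Decomposition

variable {r n : ℕ}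

def HasSymmetricDecomposition (A : Set G) (f : (Fin r → ℤ) → List G) : Prop :=
  ∃ (γ : G) (f₀ : (Fin r → ℤ) → List G) (fs : Fin r → (Fin r → ℤ) → List G),
    {x | f₀ x ≠ []}.Finite ∧ (∀ i, {x | fs i x ≠ []}.Finite) ∧
    (∀ x, IsWord A (f₀ x)) ∧ (∀ i x, IsWord A (fs i x)) ∧
    (∀ x, (f x).prod =
      (if x = 0 then γ else 1) * (f₀ x).prod * (List.ofFn fun i => (fs i x).prod).prod) ∧
    (∀ x, f₀ x = (f₀ (-x)).reverse) ∧
    (∀ i x, fs i x = (fs i (Pi.single i 1 - x)).reverse)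

lemma hasSymmetricDecomposition_fin_zero (A : Set G) (f : (Fin 0 → ℤ) → List G) :
    HasSymmetricDecomposition A f :=
  ⟨(f 0).prod, fun _ => [], Fin.elim0, by simp, fun i => i.elim0, fun _ => .nil, fun i => i.elim0,
    fun x => by simp [Subsingleton.elim x 0], fun _ => rfl, fun i => i.elim0⟩

lemma HasSymmetricDecomposition.of_hyperplane {A : Set G}
    (ih : ∀ f' : (Fin n → ℤ) → List G, (∀ y, IsWord A (f' y)) → {y | f' y ≠ []}.Finite →
      HasSymmetricDecomposition A f')
    {f : (Fin (n + 1) → ℤ) → List G} (hA : ∀ x, IsWord A (f x))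
    (hf : {x | f x ≠ []}.Finite) : HasSymmetricDecomposition A f := by
  obtain ⟨g, h, hg_fin, hh_fin, hg_word, hh_word, hg_sym, hh_sym, hgh⟩ :=
    exists_antipodal_reflection_split (π := Pi.evalAddMonoidHom (fun _ => ℤ) (Fin.last n))
      (e := Pi.single (Fin.last n) 1) hA (by simp) hf
  have hf'_fin : {y | f (Fin.snoc y 0) ++ wordInv (h (Fin.snoc y 0)) ≠ []}.Finite := by
    refine ((hf.union hh_fin).preimage (Fin.snoc_left_injective 0).injOn).subset fun y hy => ?_
    by_contra hc
    simp only [Set.mem_preimage, Set.mem_union, Set.mem_ofPred_eq, not_or, not_not] at hc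
    exact hy (by simp only [hc.1, hc.2]; rfl)
  obtain ⟨γ, f₀, fs, hf₀_fin, hfs_fin, hf₀_word, hfs_word, hprod, hf₀_sym, hfs_sym⟩ :=
    ih _ (fun y => (hA _).append (hh_word _).wordInv) hf'_fin
  refine ⟨γ, hyperplaneCases f₀ g, Fin.snoc (fun j => hyperplaneCases (fs j) fun _ => []) h,
    finite_hyperplaneCases hf₀_fin hg_fin, ?_, isWord_hyperplaneCases hf₀_word hg_word, ?_, ?_,
    fun x => ?_, ?_⟩
  · refine Fin.lastCases ?_ fun j => ?_
    · simpa using hh_fin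
    · simpa using finite_hyperplaneCases (hfs_fin j) (by simp)
  · refine Fin.lastCases ?_ fun j => ?_
    · simpa using hh_word
    · simpa using isWord_hyperplaneCases (hfs_word j) fun _ => .nil
  · intro x
    rw [prod_ofFn_snoc_hyperplaneCases, hyperplaneCases]
    by_cases hx : x (Fin.last n) = 0
    · have hprod_init := hprod (Fin.init x)
      simp only [← eq_zero_iff_init_eq_zero hx, ← hx, Fin.snoc_init_self, List.prod_append,
        prod_wordInv] at hprod_init
      rw [if_pos hx, if_pos hx, ← mul_assoc, ← hprod_init, inv_mul_cancel_right]
    · have hx0 : x ≠ 0 := fun h0 => hx (by simp [h0])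
      rw [if_neg hx, if_neg hx, if_neg hx0, hgh x hx, one_mul, one_mul]
  · rw [← zero_sub x]
    exact hyperplaneCases_eq_reverse rfl (fun y => (hf₀_sym y).trans (by rw [← zero_sub]; rfl))
      (fun x => by rw [zero_sub]; exact hg_sym x) x
  · refine Fin.lastCases ?_ fun j => ?_
    · simpa using hh_sym
    · simp only [Fin.snoc_castSucc]
      exact hyperplaneCases_eq_reverse (by simp)
        (by simpa [init_single_castSucc] using hfs_sym j) fun _ => rfl

end Decomposition

end SymmetricWordDecomposition

theorem symmetric_word_decomposition_general {G : Type*} [Group G] (A : Set G)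
    (r : ℕ) (f : (Fin r → ℤ) → List G)
    (hword : ∀ x : Fin r → ℤ, ∀ g ∈ f x, g ∈ A ∨ g⁻¹ ∈ A)
    (hfin : {x : Fin r → ℤ | f x ≠ []}.Finite) :
    ∃ (γ : G) (f₀ : (Fin r → ℤ) → List G) (fs : Fin r → (Fin r → ℤ) → List G),
      {x : Fin r → ℤ | f₀ x ≠ []}.Finite ∧
      (∀ i, {x : Fin r → ℤ | fs i x ≠ []}.Finite) ∧
      (∀ x : Fin r → ℤ, ∀ g ∈ f₀ x, g ∈ A ∨ g⁻¹ ∈ A) ∧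
      (∀ i, ∀ x : Fin r → ℤ, ∀ g ∈ fs i x, g ∈ A ∨ g⁻¹ ∈ A) ∧
      (∀ x : Fin r → ℤ,
        (f x).prod =
          (if x = 0 then γ else 1) * (f₀ x).prod *
            (List.ofFn (fun i : Fin r => (fs i x).prod)).prod) ∧
      (∀ x : Fin r → ℤ, f₀ x = (f₀ (-x)).reverse) ∧
      (∀ i, ∀ x : Fin r → ℤ, fs i x = (fs i (Pi.single i 1 - x)).reverse) := by
  induction r with
  | zero => exact SymmetricWordDecomposition.hasSymmetricDecomposition_fin_zero A f
  | succ n ih =>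
    exact SymmetricWordDecomposition.HasSymmetricDecomposition.of_hyperplane ih hword hfin

theorem symmetric_word_decomposition {G : Type*} [Group G] (A : Set G)
    (r : ℕ) (hr : 1 ≤ r) (f : (Fin r → ℤ) → List G)
    (hword : ∀ x : Fin r → ℤ, ∀ g ∈ f x, g ∈ A ∨ g⁻¹ ∈ A)
    (hfin : {x : Fin r → ℤ | f x ≠ []}.Finite) :
    ∃ (γ : G) (f₀ : (Fin r → ℤ) → List G) (fs : Fin r → (Fin r → ℤ) → List G),
      {x : Fin r → ℤ | f₀ x ≠ []}.Finite ∧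
      (∀ i, {x : Fin r → ℤ | fs i x ≠ []}.Finite) ∧
      (∀ x : Fin r → ℤ, ∀ g ∈ f₀ x, g ∈ A ∨ g⁻¹ ∈ A) ∧
      (∀ i, ∀ x : Fin r → ℤ, ∀ g ∈ fs i x, g ∈ A ∨ g⁻¹ ∈ A) ∧
      (∀ x : Fin r → ℤ,
        (f x).prod =
          (if x = 0 then γ else 1) * (f₀ x).prod *
            (List.ofFn (fun i : Fin r => (fs i x).prod)).prod) ∧
      (∀ x : Fin r → ℤ, f₀ x = (f₀ (-x)).reverse) ∧
      (∀ i, ∀ x : Fin r → ℤ, fs i x = (fs i (Pi.single i 1 - x)).reverse) :=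
  symmetric_word_decomposition_general A r f hword hfin
end

section
/- Let R be a ring, r ≥ 1, and c ∈ ℤ^r. Every finitely supported function f : ℤ^r → R with Σ_{x ∈ ℤ^r} f(x) = 0 can be written as f = g₀ + g₁ + … + g_r, where each g_i : ℤ^r → R is finitely supported, g₀(x) + g₀(c − x) = 0 for all x ∈ ℤ^r, and for each i = 1,…,r, g_i(x) + g_i(c + e_i − x) = 0 for all x ∈ ℤ^r, where e_i is the i-th standard basis vector of ℤ^r. -/
/-!
For every `x`, `δ_x - δ_(c-x)` is skew-symmetric about `c/2` and `δ_(c-x) - δ_(x+eᵢ)` is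
skew-symmetric about `(c+eᵢ)/2`; adding them, every `δ_x - δ_(x+eᵢ)` is a sum of the required
kind. Such sums form a subgroup and the `eᵢ` generate `ℤ^r`, so every `δ_x - δ_y` is one too,
and these differences generate the finitely supported functions of total sum zero.
-/

namespace Finsupp

open Set

section

variable {α R S : Type*} [AddCommGroup R] [SetLike S (α →₀ R)] [AddSubgroupClass S (α →₀ R)]

theorem mem_of_sum_eq_zero_of_single_sub_single_mem {H : S} (x₀ : α)
    (hH : ∀ x a, single x a - single x₀ a ∈ H) {f : α →₀ R} (hf : (f.sum fun _ a ↦ a) = 0) :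
    f ∈ H := by
  have hsingle : (f.sum fun _ a ↦ single x₀ a) = single x₀ (f.sum fun _ a ↦ a) :=
    (map_finsuppSum (singleAddHom x₀) f fun _ a ↦ a).symm
  have hf_eq : f = f.sum fun x a ↦ single x a - single x₀ a := by
    rw [sum_sub, sum_single, hsingle, hf, single_zero, sub_zero]
  rw [hf_eq]
  exact AddSubmonoidClass.finsuppSum_mem _ _ _ fun x _ ↦ hH x _

theorem single_sub_single_mem_of_closure_eq_top [AddCommGroup α] {H : S} {G : Set α}
    (hG : AddSubgroup.closure G = ⊤) (hH : ∀ s ∈ G, ∀ x a, single x a - single (x + s) a ∈ H)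
    (x y : α) (a : R) : single x a - single y a ∈ H := by
  suffices ∀ d, ∀ x a, single x a - single (x + d) a ∈ H by
    simpa using this (y - x) x a
  intro d
  induction (hG ▸ AddSubgroup.mem_top d : d ∈ AddSubgroup.closure G) using
    AddSubgroup.closure_induction with
  | mem s hs => exact hH s hs
  | zero => simp [zero_mem]
  | add d e _ _ hd he =>
    intro x a
    simpa [← add_assoc] using add_mem (hd x a) (he (x + d) a)
  | neg d _ hd =>
    intro x a
    simpa using neg_mem (hd (x + -d) a)

end

variable {M R : Type*} [AddCommGroup M] [AddCommGroup R]

/-- Skew-symmetry about the point `c / 2`. -/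
def skewSymmetricAbout (c : M) : Submodule ℤ (M →₀ R) where
  carrier := {g | ∀ x, g x + g (c - x) = 0}
  add_mem' {g h} hg hh x := by
    simp only [coe_add, Pi.add_apply]
    rw [add_add_add_comm, hg x, hh x, add_zero]
  zero_mem' _ := by simp
  smul_mem' n g hg x := by
    simp only [coe_smul, Pi.smul_apply]
    rw [← smul_add, hg x, smul_zero]

theorem single_sub_single_mem_skewSymmetricAbout (c x : M) (a : R) :
    single x a - single (c - x) a ∈ skewSymmetricAbout c := by
  classical
  intro y
  have h₁ : c - x = y ↔ x = c - y := by constructor <;> rintro rfl <;> abel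
  have h₂ : c - x = c - y ↔ x = y := sub_right_inj
  simp only [coe_sub, Pi.sub_apply, single_apply, h₁, h₂]
  abel

theorem single_sub_single_add_mem_sup (c s x : M) (a : R) :
    single x a - single (x + s) a ∈ skewSymmetricAbout c ⊔ skewSymmetricAbout (c + s) := by
  have hx : c + s - (c - x) = x + s := by abel
  have := Submodule.add_mem_sup (single_sub_single_mem_skewSymmetricAbout c x a)
    (single_sub_single_mem_skewSymmetricAbout (c + s) (c - x) a)
  rwa [hx, sub_add_sub_cancel] at this

theorem mem_sup_iSup_skewSymmetricAbout {ι : Type*} {e : ι → M}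
    (he : AddSubgroup.closure (range e) = ⊤) (c : M) {f : M →₀ R}
    (hf : (f.sum fun _ a ↦ a) = 0) :
    f ∈ skewSymmetricAbout c ⊔ ⨆ i, skewSymmetricAbout (c + e i) := by
  refine mem_of_sum_eq_zero_of_single_sub_single_mem 0
    (fun x a ↦ single_sub_single_mem_of_closure_eq_top he ?_ x 0 a) hf
  rintro _ ⟨i, rfl⟩ y b
  exact sup_le_sup_left (le_iSup (fun i ↦ skewSymmetricAbout (c + e i)) i) _
    (single_sub_single_add_mem_sup c (e i) y b)

end Finsupp

theorem AddSubgroup.closure_range_single_one {ι : Type*} [Fintype ι] [DecidableEq ι] :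
    closure (Set.range fun i ↦ (Pi.single i 1 : ι → ℤ)) = ⊤ := by
  refine eq_top_iff.2 fun x _ ↦ ?_
  rw [← Finset.univ_sum_single x]
  refine sum_mem fun i _ ↦ ?_
  rw [← mul_one (x i), ← smul_eq_mul, Pi.single_smul']
  exact zsmul_mem (subset_closure (Set.mem_range_self i)) _

theorem sum_of_skew_symmetric_general (R : Type*) [Ring R] (r : ℕ)
    (c : Fin r → ℤ) (f : (Fin r → ℤ) → R)
    (hfin : (Function.support f).Finite) (hsum : ∑ᶠ x, f x = 0) :
    ∃ (g₀ : (Fin r → ℤ) → R) (g : Fin r → (Fin r → ℤ) → R),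
      (Function.support g₀).Finite ∧ (∀ i, (Function.support (g i)).Finite) ∧
      (∀ x, f x = g₀ x + ∑ i, g i x) ∧
      (∀ x, g₀ x + g₀ (c - x) = 0) ∧
      (∀ i, ∀ x, g i x + g i (c + Pi.single i 1 - x) = 0) := by
  set F := Finsupp.ofSupportFinite f hfin
  have hF : (F.sum fun _ a ↦ a) = 0 := by
    rw [← hsum, finsum_eq_sum f hfin, Finsupp.sum, Finsupp.ofSupportFinite_support]
    rfl
  obtain ⟨g₀, hg₀, G, hG, hF_eq⟩ := Submodule.mem_sup.1
    (Finsupp.mem_sup_iSup_skewSymmetricAbout AddSubgroup.closure_range_single_one c hF)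
  have hG' : G ∈ ⨆ i ∈ Finset.univ, Finsupp.skewSymmetricAbout (c + Pi.single i 1) := by
    simpa only [Finset.mem_univ, iSup_pos] using hG
  obtain ⟨g, rfl⟩ := (Submodule.mem_iSup_finset_iff_exists_sum _ G).1 hG'
  refine ⟨g₀, fun i ↦ g i, g₀.hasFiniteSupport, fun i ↦ (g i).1.hasFiniteSupport,
    fun x ↦ ?_, hg₀, fun i ↦ (g i).2⟩
  change F x = _
  rw [← hF_eq]
  simp

theorem sum_of_skew_symmetric (R : Type*) [Ring R] (r : ℕ) (hr : 1 ≤ r)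
    (c : Fin r → ℤ) (f : (Fin r → ℤ) → R)
    (hfin : (Function.support f).Finite) (hsum : ∑ᶠ x, f x = 0) :
    ∃ (g₀ : (Fin r → ℤ) → R) (g : Fin r → (Fin r → ℤ) → R),
      (Function.support g₀).Finite ∧ (∀ i, (Function.support (g i)).Finite) ∧
      (∀ x, f x = g₀ x + ∑ i, g i x) ∧
      (∀ x, g₀ x + g₀ (c - x) = 0) ∧
      (∀ i, ∀ x, g i x + g i (c + Pi.single i 1 - x) = 0) :=
  sum_of_skew_symmetric_general R r c f hfin hsum
end

section
/- Let R be a ring, r ≥ 1, and p ∈ ℤ^r. Suppose f : ℤ^r → R is finitely supported and satisfies Σ_{x ∈ 2ℤ^r + v} f(x) = 0 for every v ∈ {0,1}^r (i.e., for each of the 2^r vectors v = ε₁e₁ + … + ε_r e_r with each ε_i ∈ {0,1}). Then f = g₀ + g₁ + … + g_r, where each g_i : ℤ^r → R is finitely supported, g₀(x) + g₀(2p − x) = 0 for all x ∈ ℤ^r, and for each i = 1,…,r, g_i(x) + g_i(2(p + e_i) − x) = 0 for all x ∈ ℤ^r, where e_i is the i-th standard basis vector of ℤ^r. -/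
/-!
Let `V` be the span of the finitely supported functions that are skew-symmetric about `p` or
about one of the `p + eᵢ`. For a point mass `δ_a`, the function `δ_a - δ_{2p-a}` is skew about
`p`, and `δ_{a+2eᵢ} - δ_{2p-a}` is skew about `p + eᵢ`, since reflecting `a + 2eᵢ` in `p + eᵢ`
gives `2p - a` again. Subtracting, `δ_a - δ_{a+2eᵢ} ∈ V`, and hence `δ_a - δ_b ∈ V` whenever
`a ≡ b mod 2`. Now write `f = Σ_a f(a) (δ_a - δ_{a mod 2}) + Σ_a f(a) δ_{a mod 2}`. The second sum
vanishes because `f` sums to zero over each class mod 2, so `f ∈ V`.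
-/

open Function

section SkewSymmetric

variable {G : Type*} [AddCommGroup G] (S : Type*) {M : Type*} [Ring S] [AddCommGroup M] [Module S M]

def skewSubmodule (q : G) : Submodule S (G → M) where
  carrier := {g | (support g).Finite ∧ ∀ x, g x + g (2 • q - x) = 0}
  zero_mem' := by simp
  add_mem' := by
    rintro g g' ⟨hg, hgq⟩ ⟨hg', hg'q⟩
    refine ⟨(hg.union hg').subset (support_add g g'), fun x => ?_⟩
    rw [Pi.add_apply, Pi.add_apply, add_add_add_comm, hgq, hg'q, add_zero]
  smul_mem' := by
    rintro c g ⟨hg, hgq⟩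
    refine ⟨hg.subset (support_const_smul_subset c g), fun x => ?_⟩
    simp only [Pi.smul_apply, ← smul_add, hgq, smul_zero]

variable {S}

theorem single_sub_single_reflect_mem_skewSubmodule [DecidableEq G] (q a : G) (c : M) :
    (Pi.single a c - Pi.single (2 • q - a) c : G → M) ∈ skewSubmodule S q := by
  refine ⟨((Set.finite_singleton a).union (Set.finite_singleton _)).subset
    ((support_sub _ _).trans (Set.union_subset_union Pi.support_single_subset
      Pi.support_single_subset)), fun x => ?_⟩
  have hreflect : ∀ y, 2 • q - x = y ↔ x = 2 • q - y := fun y => by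
    constructor <;> rintro rfl <;> abel
  simp only [Pi.sub_apply, Pi.single_apply, hreflect, sub_sub_cancel]
  split_ifs <;> abel

theorem single_sub_single_add_two_nsmul_mem_sup [DecidableEq G] (q e a : G) (c : M) :
    (Pi.single a c - Pi.single (a + 2 • e) c : G → M) ∈
      skewSubmodule S q ⊔ skewSubmodule S (q + e) := by
  have hcentre : 2 • (q + e) - (a + 2 • e) = 2 • q - a := by abel
  have := Submodule.sub_mem_sup (single_sub_single_reflect_mem_skewSubmodule (S := S) q a c)
    (single_sub_single_reflect_mem_skewSubmodule (S := S) (q + e) (a + 2 • e) c)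
  rw [hcentre] at this
  convert this using 1
  abel

end SkewSymmetric

section Shifts

variable {G : Type*} [AddCommGroup G] [DecidableEq G] {S M : Type*} [Ring S] [AddCommGroup M]
  [Module S M]

def singleShifts (V : Submodule S (G → M)) : AddSubgroup G where
  carrier := {k | ∀ a c, (Pi.single a c - Pi.single (a + k) c : G → M) ∈ V}
  zero_mem' := by simp
  add_mem' := by
    intro k l hk hl a c
    have := V.add_mem (hk a c) (hl (a + k) c)
    rwa [sub_add_sub_cancel, add_assoc] at this
  neg_mem' := by
    intro k hk a c
    have := V.neg_mem (hk (a + -k) c)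
    rwa [neg_sub, neg_add_cancel_right] at this

end Shifts

theorem two_nsmul_mem_of_two_nsmul_single_mem {ι : Type*} [Finite ι] [DecidableEq ι]
    (H : AddSubgroup (ι → ℤ)) (h : ∀ i, 2 • (Pi.single i 1 : ι → ℤ) ∈ H) (k : ι → ℤ) :
    2 • k ∈ H := by
  induction k using Pi.single_induction with
  | zero => simp
  | add k l hk hl => simpa only [smul_add] using H.add_mem hk hl
  | single i m =>
    have : 2 • (Pi.single i m : ι → ℤ) = m • 2 • Pi.single i 1 := by
      ext j
      by_cases hj : j = i <;> simp [hj, mul_comm]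
    simpa only [this] using H.zsmul_mem (h i) m

theorem mem_of_finsum_preimage_eq_zero {α S M : Type*} [DecidableEq α] [Ring S] [AddCommGroup M]
    [Module S M] {V : Submodule S (α → M)} (π : α → α)
    (hπ : ∀ a c, (Pi.single a c - Pi.single (π a) c : α → M) ∈ V) {f : α → M}
    (hf : (support f).Finite) (hfibre : ∀ a, ∑ᶠ x ∈ π ⁻¹' {π a}, f x = 0) : f ∈ V := by
  set s := hf.toFinset
  have hpushforward : (∑ a ∈ s, Pi.single (π a) (f a) : α → M) = 0 := by
    ext x
    rw [Finset.sum_apply, Pi.zero_apply]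
    by_cases hx : ∃ b, π b = x
    · obtain ⟨b, rfl⟩ := hx
      rw [← hfibre b, finsum_mem_eq_sum_of_inter_support_eq f (t := s.filter (π · = π b))]
      · rw [Finset.sum_filter]
        simp [Pi.single_apply, eq_comm]
      · ext
        simp +contextual [s]
    · exact Finset.sum_eq_zero fun a _ => Pi.single_eq_of_ne (fun h => hx ⟨a, h.symm⟩) _
  have hdecomp : f = ∑ a ∈ s, (Pi.single a (f a) - Pi.single (π a) (f a)) := by
    rw [Finset.sum_sub_distrib, hpushforward, sub_zero]
    ext x
    rw [Finset.sum_apply, Finset.sum_pi_single]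
    split_ifs with hx
    · rfl
    · simpa [s] using hx
  rw [hdecomp]
  exact sum_mem fun a _ => hπ a (f a)

theorem mod_two_eq_add_two_nsmul {ι : Type*} (a : ι → ℤ) :
    (fun j => a j % 2) = a + 2 • fun j => -(a j / 2) := by
  funext j
  simp only [Pi.add_apply, two_nsmul]
  omega

theorem setOf_eq_add_two_nsmul_eq_preimage_mod_two {ι : Type*} (v : ι → ℤ)
    (hv : ∀ i, v i = 0 ∨ v i = 1) :
    {x | ∃ y, x = v + 2 • y} = (fun x j => x j % 2) ⁻¹' {v} := by
  ext x
  simp only [Set.mem_ofPred_eq, Set.mem_preimage, Set.mem_singleton_iff, funext_iff,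
    Pi.add_apply, two_nsmul]
  constructor
  · rintro ⟨y, hy⟩ j
    have := hv j
    have := hy j
    omega
  · intro h
    refine ⟨fun j => x j / 2, fun j => ?_⟩
    have := h j
    dsimp only
    omega

theorem sum_of_skew_symmetric_integral_centres_general (R : Type*) [Ring R] (r : ℕ)
    (p : Fin r → ℤ) (f : (Fin r → ℤ) → R)
    (hfin : (Function.support f).Finite)
    (hsum : ∀ v : Fin r → ℤ, (∀ i, v i = 0 ∨ v i = 1) →
      ∑ᶠ x ∈ {x : Fin r → ℤ | ∃ y : Fin r → ℤ, x = v + 2 • y}, f x = 0) :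
    ∃ (g₀ : (Fin r → ℤ) → R) (g : Fin r → (Fin r → ℤ) → R),
      (Function.support g₀).Finite ∧ (∀ i, (Function.support (g i)).Finite) ∧
      (∀ x, f x = g₀ x + ∑ i, g i x) ∧
      (∀ x, g₀ x + g₀ (2 • p - x) = 0) ∧
      (∀ i, ∀ x, g i x + g i (2 • (p + Pi.single i 1) - x) = 0) := by
  classical
  set V : Submodule R ((Fin r → ℤ) → R) :=
    skewSubmodule R p ⊔ ⨆ i, skewSubmodule R (p + Pi.single i 1)
  have hshifts : ∀ k, 2 • k ∈ singleShifts V :=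
    two_nsmul_mem_of_two_nsmul_single_mem _ fun i a c =>
      sup_le_sup_left (le_iSup (fun i => skewSubmodule R (p + Pi.single i 1)) i) _
        (single_sub_single_add_two_nsmul_mem_sup p (Pi.single i 1) a c)
  have hmod_two (a : Fin r → ℤ) (j : Fin r) : a j % 2 = 0 ∨ a j % 2 = 1 :=
    Int.emod_two_eq_zero_or_one (a j)
  have hf : f ∈ V := by
    refine mem_of_finsum_preimage_eq_zero (fun x j => x j % 2) (fun a c => ?_) hfin fun a => ?_
    · rw [mod_two_eq_add_two_nsmul a]
      exact hshifts _ a c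
    · rw [← setOf_eq_add_two_nsmul_eq_preimage_mod_two _ (hmod_two a)]
      exact hsum _ (hmod_two a)
  obtain ⟨g₀, hg₀, g', hg', rfl⟩ := Submodule.mem_sup.1 hf
  obtain ⟨g, hg, rfl⟩ := (Submodule.mem_iSup_iff_exists_finsupp _ _).1 hg'
  refine ⟨g₀, g, hg₀.1, fun i => (hg i).1, fun x => ?_, hg₀.2, fun i => (hg i).2⟩
  rw [Finsupp.sum_fintype _ _ fun _ => rfl, Pi.add_apply, Finset.sum_apply]

theorem sum_of_skew_symmetric_integral_centres (R : Type*) [Ring R] (r : ℕ) (hr : 1 ≤ r)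
    (p : Fin r → ℤ) (f : (Fin r → ℤ) → R)
    (hfin : (Function.support f).Finite)
    (hsum : ∀ v : Fin r → ℤ, (∀ i, v i = 0 ∨ v i = 1) →
      ∑ᶠ x ∈ {x : Fin r → ℤ | ∃ y : Fin r → ℤ, x = v + 2 • y}, f x = 0) :
    ∃ (g₀ : (Fin r → ℤ) → R) (g : Fin r → (Fin r → ℤ) → R),
      (Function.support g₀).Finite ∧ (∀ i, (Function.support (g i)).Finite) ∧
      (∀ x, f x = g₀ x + ∑ i, g i x) ∧
      (∀ x, g₀ x + g₀ (2 • p - x) = 0) ∧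
      (∀ i, ∀ x, g i x + g i (2 • (p + Pi.single i 1) - x) = 0) :=
  sum_of_skew_symmetric_integral_centres_general R r p f hfin hsum
end

section
/- Let G be a finitely generated solvable group satisfying max-n, i.e., every normal subgroup of G is the normal closure of some finite subset of G. Then there exist a finite generating set B of G and n ∈ ℕ such that every element of G is a product of n palindromes over B. -/
/-! Induct along the derived series. Suppose every element of `G` is a product of `n`
palindromes modulo `G⁽ⁱ⁾`. By max-n, `G⁽ⁱ⁾` is the normal closure of a finite set `T`, so after
adding `T` to the generators it suffices to bound the palindromic width of the abelian normal
subgroup `A = G⁽ⁱ⁾ / G⁽ⁱ⁺¹⁾` of `G / G⁽ⁱ⁺¹⁾`. For a letter `b`, the map `a ↦ ⁅a, b⁆` is a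
homomorphism on `A`, and `b a b⁻¹ = a ⁅a⁻¹, b⁆`. Hence the product of the finitely many commuting
subgroups `⁅A, b⁆` and `⟨b⟩ ∩ A` is normal and contains `T`, so it is all of `A`. Finally, each
`⁅a, b⁆` is a product of three palindromes and each power of `b` is a palindrome. -/

open Subgroup
open scoped commutatorElement Pointwise

section Palindromes

variable {G : Type*} [Group G] {X : Set G}

theorem Subgroup.exists_list_of_mem_closure {x : G} (hx : x ∈ closure X) :
    ∃ u : List G, (∀ g ∈ u, g ∈ X ∨ g⁻¹ ∈ X) ∧ u.prod = x := by
  rw [← mem_toSubmonoid, closure_toSubmonoid] at hx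
  obtain ⟨u, hu, rfl⟩ := Submonoid.exists_list_of_mem_closure hx
  exact ⟨u, fun g hg => by simpa using hu g hg, rfl⟩

theorem IsPalindromicWord.append_reverse {u : List G} (hu : ∀ g ∈ u, g ∈ X ∨ g⁻¹ ∈ X) :
    IsPalindromicWord X (u ++ u.reverse) :=
  ⟨by simpa using hu, by simp⟩

theorem IsPalindromicWord.append_singleton_append_reverse {u : List G} {b : G}
    (hu : ∀ g ∈ u, g ∈ X ∨ g⁻¹ ∈ X) (hb : b ∈ X ∨ b⁻¹ ∈ X) :
    IsPalindromicWord X (u ++ [b] ++ u.reverse) :=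
  ⟨by simp only [List.mem_append, List.mem_singleton, List.mem_reverse]; grind, by simp⟩

theorem IsPalindromicWord.replicate {b : G} (hb : b ∈ X ∨ b⁻¹ ∈ X) (n : ℕ) :
    IsPalindromicWord X (List.replicate n b) :=
  ⟨fun g hg => List.eq_of_mem_replicate hg ▸ hb, by simp⟩

namespace IsProdOfPalindromes

theorem one (n : ℕ) : IsProdOfPalindromes X n 1 :=
  ⟨List.replicate n [], by simp, fun w hw => List.eq_of_mem_replicate hw ▸ ⟨by simp, rfl⟩,
    by simp⟩

theorem mul_s14 {m n : ℕ} {g h : G} (hg : IsProdOfPalindromes X m g)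
    (hh : IsProdOfPalindromes X n h) : IsProdOfPalindromes X (m + n) (g * h) := by
  obtain ⟨ws, rfl, hws, rfl⟩ := hg
  obtain ⟨ws', rfl, hws', rfl⟩ := hh
  exact ⟨ws ++ ws', by simp, fun w hw => (List.mem_append.mp hw).elim (hws w) (hws' w),
    by simp⟩

theorem mono_set {Y : Set G} (hXY : X ⊆ Y) {n : ℕ} {g : G} (hg : IsProdOfPalindromes X n g) :
    IsProdOfPalindromes Y n g := by
  obtain ⟨ws, hn, hws, hg⟩ := hg
  exact ⟨ws, hn, fun w hw => ⟨fun l hl => ((hws w hw).1 l hl).imp (@hXY _) (@hXY _),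
    (hws w hw).2⟩, hg⟩

theorem _root_.IsPalindromicWord.isProdOfPalindromes_s14 {w : List G}
    (hw : IsPalindromicWord X w) : IsProdOfPalindromes X 1 w.prod :=
  ⟨[w], rfl, by simpa using hw, by simp⟩

theorem zpow {b : G} (hb : b ∈ X ∨ b⁻¹ ∈ X) (k : ℤ) : IsProdOfPalindromes X 1 (b ^ k) := by
  obtain ⟨n, rfl | rfl⟩ := Int.eq_nat_or_neg k
  · simpa using (IsPalindromicWord.replicate hb n).isProdOfPalindromes_s14
  · have hb' : b⁻¹ ∈ X ∨ b⁻¹⁻¹ ∈ X := by rwa [inv_inv, or_comm]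
    simpa using (IsPalindromicWord.replicate hb' n).isProdOfPalindromes_s14

/-- Writing `x` as a word `u`, and `ū` for `u` with every letter inverted,
`⁅x, b⁆ = (u b uᴿ) (ū ūᴿ) b⁻¹`, where `ᴿ` is reversal. -/
theorem commutator {x b : G} (hx : x ∈ closure X) (hb : b ∈ X ∨ b⁻¹ ∈ X) :
    IsProdOfPalindromes X 3 ⁅x, b⁆ := by
  obtain ⟨u, hu, rfl⟩ := Subgroup.exists_list_of_mem_closure hx
  have hv : ∀ g ∈ u.map (·⁻¹), g ∈ X ∨ g⁻¹ ∈ X := by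
    simpa [or_comm] using fun g hg => hu g⁻¹ hg
  have hb' : b⁻¹ ∈ X ∨ b⁻¹⁻¹ ∈ X := by rwa [inv_inv, or_comm]
  have key := ((IsPalindromicWord.append_singleton_append_reverse hu hb).isProdOfPalindromes_s14.mul_s14
    (IsPalindromicWord.append_reverse hv).isProdOfPalindromes_s14).mul_s14
    (IsPalindromicWord.replicate hb' 1).isProdOfPalindromes_s14
  convert key using 1
  have hvprod : (u.map (·⁻¹)).prod = u.reverse.prod⁻¹ := by
    rw [List.prod_inv_reverse, List.map_reverse, List.reverse_reverse]
  simp only [commutatorElement_def, List.prod_append, hvprod, ← List.prod_inv_reverse]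
  simp [mul_assoc]

end IsProdOfPalindromes

end Palindromes

theorem IsProdOfPalindromes.exists_preimage {G H : Type*} [Group G] [Group H] (f : G →* H)
    {X : Set G} {n : ℕ} {y : H} (hy : IsProdOfPalindromes (f '' X) n y) :
    ∃ x, IsProdOfPalindromes X n x ∧ f x = y := by
  have hlift : ∀ l : H, ∃ g : G, (l ∈ f '' X ∨ l⁻¹ ∈ f '' X) → (g ∈ X ∨ g⁻¹ ∈ X) ∧ f g = l := by
    intro l
    by_cases hl : l ∈ f '' X
    · obtain ⟨g, hg, rfl⟩ := hl
      exact ⟨g, fun _ => ⟨Or.inl hg, rfl⟩⟩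
    by_cases hl' : l⁻¹ ∈ f '' X
    · obtain ⟨g, hg, hgl⟩ := hl'
      exact ⟨g⁻¹, fun _ => ⟨Or.inr (by rwa [inv_inv]), by rw [map_inv, hgl, inv_inv]⟩⟩
    exact ⟨1, fun h => (h.elim hl hl').elim⟩
  choose φ hφ using hlift
  obtain ⟨ws, rfl, hws, rfl⟩ := hy
  have hφw : ∀ w ∈ ws, (w.map φ).map f = w := fun w hw => by
    conv_rhs => rw [← List.map_id w]
    rw [List.map_map]
    exact List.map_congr_left fun l hl => (hφ l ((hws w hw).1 l hl)).2
  refine ⟨((ws.map (List.map φ)).map List.prod).prod, ⟨ws.map (List.map φ), by simp, ?_, rfl⟩, ?_⟩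
  · simp only [List.mem_map, forall_exists_index, and_imp]
    rintro _ w hw rfl
    refine ⟨?_, by rw [← List.map_reverse, (hws w hw).2]⟩
    simp only [List.mem_map, forall_exists_index, and_imp]
    rintro _ l hl rfl
    exact (hφ l ((hws w hw).1 l hl)).1
  · simp only [map_list_prod, List.map_map]
    congr 1
    exact List.map_congr_left fun w hw => by
      rw [Function.comp_apply, Function.comp_apply, map_list_prod, hφw w hw]

theorem Subgroup.normal_of_conj_mem_of_closure_eq_top {G : Type*} [Group G] {Y : Set G}
    (hY : closure Y = ⊤) (hYinv : ∀ y ∈ Y, y⁻¹ ∈ Y) {K : Subgroup G}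
    (hK : ∀ y ∈ Y, ∀ k ∈ K, y * k * y⁻¹ ∈ K) : K.Normal := by
  rw [← normalizer_eq_top_iff, eq_top_iff, ← hY, closure_le]
  refine fun y hy => mem_normalizer_iff.mpr fun k => ⟨hK y hy k, fun hk => ?_⟩
  simpa [mul_assoc] using hK y⁻¹ (hYinv y hy) _ hk

section Abelian

variable {Q : Type*} [Group Q] {X : Set Q}

theorem forall_mem_sup_isProdOfPalindromes {A H K : Subgroup Q} [IsMulCommutative A]
    (hHA : H ≤ A) (hKA : K ≤ A) {m n : ℕ} (hH : ∀ h ∈ H, IsProdOfPalindromes X m h)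
    (hK : ∀ k ∈ K, IsProdOfPalindromes X n k) :
    ∀ g ∈ H ⊔ K, IsProdOfPalindromes X (m + n) g := by
  have hHK : H ≤ normalizer K :=
    (hHA.trans A.le_centralizer).trans ((centralizer_le hKA).trans (centralizer_le_normalizer _))
  intro g hg
  rw [← SetLike.mem_coe, coe_mul_of_left_le_normalizer_right H K hHK] at hg
  obtain ⟨h, hh, k, hk, rfl⟩ := hg
  exact (hH h hh).mul_s14 (hK k hk)

theorem forall_mem_biSup_isProdOfPalindromes {ι : Type*} {A : Subgroup Q} [IsMulCommutative A]
    {K : ι → Subgroup Q} (s : Finset ι) (hKA : ∀ i ∈ s, K i ≤ A) {n : ℕ}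
    (hK : ∀ i ∈ s, ∀ g ∈ K i, IsProdOfPalindromes X n g) :
    ∀ g ∈ ⨆ i ∈ s, K i, IsProdOfPalindromes X (s.card * n) g := by
  classical
  induction s using Finset.induction_on with
  | empty => simp [IsProdOfPalindromes.one]
  | insert a s has ih =>
    rw [Finset.iSup_insert, Finset.card_insert_of_notMem has, add_mul, one_mul, add_comm]
    refine forall_mem_sup_isProdOfPalindromes (A := A) (hKA a (by simp))
      (iSup₂_le fun i hi => hKA i (by simp [hi])) (hK a (by simp)) ?_
    exact ih (fun i hi => hKA i (by simp [hi])) (fun i hi => hK i (by simp [hi]))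

variable (A : Subgroup Q) [A.Normal] [IsMulCommutative A]

def commutatorRightHom (b : Q) : A →* Q where
  toFun a := ⁅(a : Q), b⁆
  map_one' := by simp
  map_mul' a a' := by
    have hc : b * (a : Q)⁻¹ * b⁻¹ ∈ A := ‹A.Normal›.conj_mem _ (inv_mem a.2) b
    have h₁ := setLike_mul_comm hc a'.2
    have h₂ := setLike_mul_comm (inv_mem a.2) (inv_mem a'.2)
    simp only [Subgroup.coe_mul, commutatorElement_def, mul_inv_rev]
    calc (a : Q) * a' * b * ((a' : Q)⁻¹ * (a : Q)⁻¹) * b⁻¹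
        = a * a' * b * ((a : Q)⁻¹ * (a' : Q)⁻¹) * b⁻¹ := by rw [h₂]
      _ = a * (a' * (b * (a : Q)⁻¹ * b⁻¹)) * (b * (a' : Q)⁻¹ * b⁻¹) := by group
      _ = a * ((b * (a : Q)⁻¹ * b⁻¹) * a') * (b * (a' : Q)⁻¹ * b⁻¹) := by rw [h₁]
      _ = a * b * (a : Q)⁻¹ * b⁻¹ * (a' * b * (a' : Q)⁻¹ * b⁻¹) := by group

theorem commutatorRightHom_apply (b : Q) (a : A) : commutatorRightHom A b a = ⁅(a : Q), b⁆ :=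
  rfl

theorem commutatorRightHom_range_le (b : Q) : (commutatorRightHom A b).range ≤ A := by
  rintro _ ⟨a, rfl⟩
  have : ⁅(a : Q), b⁆ = a * (b * (a : Q)⁻¹ * b⁻¹) := by group
  rw [commutatorRightHom_apply, this]
  exact mul_mem a.2 (‹A.Normal›.conj_mem _ (inv_mem a.2) b)

theorem le_biSup_range_commutatorRightHom_sup_zpowers_inf {Y : Set Q} (hY : closure Y = ⊤)
    (hYinv : ∀ y ∈ Y, y⁻¹ ∈ Y) {S : Set Q} (hSY : S ⊆ Y) (hSA : normalClosure S = A) :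
    A ≤ ⨆ b ∈ Y, ((commutatorRightHom A b).range ⊔ (zpowers b ⊓ A)) := by
  set L : Q → Subgroup Q := fun b => (commutatorRightHom A b).range ⊔ (zpowers b ⊓ A)
  have hLA : ⨆ b ∈ Y, L b ≤ A :=
    iSup₂_le fun b _ => sup_le (commutatorRightHom_range_le A b) inf_le_right
  have : (⨆ b ∈ Y, L b).Normal := by
    refine normal_of_conj_mem_of_closure_eq_top hY hYinv fun y hy k hk => ?_
    have hconj : y * k * y⁻¹ = k * commutatorRightHom A y ⟨k⁻¹, inv_mem (hLA hk)⟩ := by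
      rw [commutatorRightHom_apply, commutatorElement_def]
      group
    rw [hconj]
    exact mul_mem hk (le_biSup L hy (mem_sup_left ⟨_, rfl⟩))
  refine hSA.ge.trans (normalClosure_le_normal fun s hs => le_biSup L (hSY hs) ?_)
  exact mem_sup_right ⟨mem_zpowers s, hSA ▸ subset_normalClosure hs⟩

theorem exists_forall_mem_isProdOfPalindromes_of_isMulCommutative {X : Finset Q}
    (hX : closure (X : Set Q) = ⊤) {S : Set Q} (hSX : S ⊆ X) (hSA : normalClosure S = A) :
    ∃ n, ∀ a ∈ A, IsProdOfPalindromes (X : Set Q) n a := by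
  classical
  set Y := X ∪ X⁻¹
  have hY : ∀ b ∈ Y, b ∈ (X : Set Q) ∨ b⁻¹ ∈ (X : Set Q) := by
    simp [Y, Finset.mem_inv']
  have hAY := le_biSup_range_commutatorRightHom_sup_zpowers_inf A (Y := Y)
    (eq_top_mono (closure_mono (by simp [Y])) hX) (by simp [Y, or_comm])
    (hSX.trans (by simp [Y])) hSA
  refine ⟨Y.card * (3 + 1), fun a ha => forall_mem_biSup_isProdOfPalindromes Y
    (fun b _ => sup_le (commutatorRightHom_range_le A b) inf_le_right) (fun b hb => ?_) a
    (hAY ha)⟩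
  refine forall_mem_sup_isProdOfPalindromes (commutatorRightHom_range_le A b) inf_le_right ?_ ?_
  · rintro _ ⟨a, rfl⟩
    exact IsProdOfPalindromes.commutator (hX ▸ mem_top _) (hY b hb)
  · rintro _ ⟨⟨k, rfl⟩, -⟩
    exact IsProdOfPalindromes.zpow (hY b hb) k

end Abelian

section Solvable

variable {G : Type*} [Group G]

theorem exists_forall_mem_isProdOfPalindromes_mod {M N : Subgroup G} [M.Normal] [N.Normal]
    (hMN : ⁅M, M⁆ ≤ N) {C T : Finset G} (hC : closure (C : Set G) = ⊤) (hTC : T ⊆ C)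
    (hT : normalClosure (T : Set G) = M) :
    ∃ n, ∀ g ∈ M, ∃ q, IsProdOfPalindromes C n q ∧ q⁻¹ * g ∈ N := by
  classical
  set π := QuotientGroup.mk' N
  have hπ : Function.Surjective π := QuotientGroup.mk'_surjective N
  set A := M.map π
  have : A.Normal := ‹M.Normal›.map π hπ
  have : IsMulCommutative A := by
    rw [← le_centralizer_iff_isMulCommutative, ← commutator_eq_bot_iff_le_centralizer,
      ← map_commutator, eq_bot_iff]
    exact (map_mono hMN).trans (QuotientGroup.map_mk'_self N).le
  have hX : closure ((C.image π : Finset (G ⧸ N)) : Set (G ⧸ N)) = ⊤ := by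
    rw [Finset.coe_image, ← MonoidHom.map_closure, hC, map_top_of_surjective π hπ]
  obtain ⟨n, hn⟩ := exists_forall_mem_isProdOfPalindromes_of_isMulCommutative A hX (S := π '' T)
    (by simpa using Set.image_mono hTC) (by rw [← map_normalClosure _ _ hπ, hT])
  refine ⟨n, fun g hg => ?_⟩
  rw [Finset.coe_image] at hn
  obtain ⟨q, hq, hqg⟩ := (hn (π g) (mem_map_of_mem π hg)).exists_preimage
  exact ⟨q, hq, QuotientGroup.eq.mp hqg⟩

theorem exists_isProdOfPalindromes_mod_derivedSeries [Group.FG G]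
    (hmaxn : ∀ N : Subgroup G, N.Normal → ∃ X : Finset G, normalClosure (X : Set G) = N)
    (i : ℕ) : ∃ (C : Finset G) (n : ℕ), closure (C : Set G) = ⊤ ∧
      ∀ g : G, ∃ p, IsProdOfPalindromes C n p ∧ p⁻¹ * g ∈ derivedSeries G i := by
  induction i with
  | zero =>
    obtain ⟨C, hC⟩ := Group.FG.out (G := G)
    exact ⟨C, 0, hC, fun g => ⟨1, .one 0, by simp⟩⟩
  | succ i ih =>
    classical
    obtain ⟨C, n, hC, hCn⟩ := ih
    obtain ⟨T, hT⟩ := hmaxn _ (derivedSeries_normal G i)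
    have hCT : closure ((C ∪ T : Finset G) : Set G) = ⊤ :=
      eq_top_mono (closure_mono (by simp)) hC
    obtain ⟨m, hm⟩ := exists_forall_mem_isProdOfPalindromes_mod (derivedSeries_succ G i).ge hCT
      Finset.subset_union_right hT
    refine ⟨C ∪ T, n + m, hCT, fun g => ?_⟩
    obtain ⟨p, hp, hpg⟩ := hCn g
    obtain ⟨q, hq, hqg⟩ := hm _ hpg
    exact ⟨p * q, (hp.mono_set (by simp)).mul_s14 hq, by simpa [mul_assoc] using hqg⟩

end Solvable

theorem solvable_max_n_finite_palindromic_width {G : Type*} [Group G]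
    [Group.FG G] [Group.IsSolvable G]
    (hmaxn : ∀ N : Subgroup G, N.Normal → ∃ X : Finset G,
      Subgroup.normalClosure (X : Set G) = N) :
    ∃ (B : Finset G) (n : ℕ), Subgroup.closure (B : Set G) = ⊤ ∧
      ∀ g : G, IsProdOfPalindromes (B : Set G) n g := by
  obtain ⟨d, hd⟩ := Group.IsSolvable.solvable (G := G)
  obtain ⟨B, n, hB, hBn⟩ := exists_isProdOfPalindromes_mod_derivedSeries hmaxn d
  refine ⟨B, n, hB, fun g => ?_⟩
  obtain ⟨p, hp, hpg⟩ := hBn g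
  rw [hd, mem_bot, inv_mul_eq_one] at hpg
  exact hpg ▸ hp
end

section
/- Let G be a group and X ⊆ G. For every element g of the subgroup generated by X and every b ∈ X ∪ X⁻¹, the commutator g·b·g⁻¹·b⁻¹ is a product of 3 palindromes over X. -/
/-!
Write `g = w.prod` for a word `w` over `X` and let `v` be `w` with every letter inverted, so that
`v.reverse.prod = g⁻¹` and `w.reverse.prod = v.prod⁻¹`. Then
`g * b * g⁻¹ * b⁻¹ = (w ++ [b] ++ w.reverse).prod * (v ++ v.reverse).prod * [b⁻¹].prod`,
and each of the three factors is a palindrome.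
-/

section Palindromes

variable {G : Type*} [Group G] {X : Set G}

theorem exists_list_of_mem_subgroupClosure {g : G} (hg : g ∈ Subgroup.closure X) :
    ∃ w : List G, (∀ x ∈ w, x ∈ X ∨ x⁻¹ ∈ X) ∧ w.prod = g := by
  rw [← Subgroup.mem_toSubmonoid, Subgroup.closure_toSubmonoid] at hg
  obtain ⟨w, hw, rfl⟩ := Submonoid.exists_list_of_mem_closure hg
  exact ⟨w, fun x hx => hw x hx, rfl⟩

theorem forall_mem_map_inv_of_forall_mem {w : List G} (hw : ∀ x ∈ w, x ∈ X ∨ x⁻¹ ∈ X) :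
    ∀ x ∈ w.map (·⁻¹), x ∈ X ∨ x⁻¹ ∈ X := by
  simp only [List.mem_map, forall_exists_index, and_imp, forall_apply_eq_imp_iff₂, inv_inv]
  exact fun x hx => (hw x hx).symm

namespace IsPalindromicWord

theorem nil : IsPalindromicWord X [] :=
  ⟨by simp, rfl⟩

theorem singleton {x : G} (hx : x ∈ X ∨ x⁻¹ ∈ X) : IsPalindromicWord X [x] :=
  ⟨by simpa using hx, rfl⟩

theorem append_append_reverse_s17 {w p : List G} (hw : ∀ x ∈ w, x ∈ X ∨ x⁻¹ ∈ X)
    (hp : IsPalindromicWord X p) : IsPalindromicWord X (w ++ p ++ w.reverse) := by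
  refine ⟨?_, by simp [hp.2]⟩
  simp only [List.mem_append, List.mem_reverse]
  rintro x ((hx | hx) | hx)
  exacts [hw x hx, hp.1 x hx, hw x hx]

theorem isProdOfPalindromes_one {w : List G} (hw : IsPalindromicWord X w) :
    IsProdOfPalindromes X 1 w.prod :=
  ⟨[w], rfl, by simpa using hw, by simp⟩

end IsPalindromicWord

theorem IsProdOfPalindromes.mul_s17 {m n : ℕ} {a c : G} (ha : IsProdOfPalindromes X m a)
    (hc : IsProdOfPalindromes X n c) : IsProdOfPalindromes X (m + n) (a * c) := by
  obtain ⟨us, rfl, hus, rfl⟩ := ha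
  obtain ⟨vs, rfl, hvs, rfl⟩ := hc
  refine ⟨us ++ vs, List.length_append, ?_, by simp⟩
  simp only [List.mem_append]
  rintro w (hw | hw)
  exacts [hus w hw, hvs w hw]

end Palindromes

theorem commutator_with_generator_is_prod_of_three_palindromes {G : Type*} [Group G]
    (X : Set G) (g : G) (hg : g ∈ Subgroup.closure X) (b : G) (hb : b ∈ X ∨ b⁻¹ ∈ X) :
    IsProdOfPalindromes X 3 (g * b * g⁻¹ * b⁻¹) := by
  obtain ⟨w, hw, rfl⟩ := exists_list_of_mem_subgroupClosure hg
  have hbinv : b⁻¹ ∈ X ∨ b⁻¹⁻¹ ∈ X := by rwa [inv_inv, or_comm]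
  have hfirst :=
    (IsPalindromicWord.append_append_reverse_s17 hw (.singleton hb)).isProdOfPalindromes_one
  have hsecond := (IsPalindromicWord.append_append_reverse_s17
    (forall_mem_map_inv_of_forall_mem hw) (.nil (X := X))).isProdOfPalindromes_one
  have hthird := (IsPalindromicWord.singleton hbinv).isProdOfPalindromes_one
  convert (hfirst.mul_s17 hsecond).mul_s17 hthird using 1
  simp only [List.prod_append, List.prod_singleton, List.append_nil, List.prod_reverse_noncomm w,
    ← List.prod_inv_reverse]
  group
end

section
/- Let G be a group and X ⊆ G. If g ∈ G is a product of k palindromes over X and h belongs to the subgroup generated by X, then h·g·h⁻¹ is a product of k + 1 palindromes over X. -/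
/-!
Write `h = x₁ ⋯ xₘ` with `xᵢ ∈ X ∪ X⁻¹`, let `u = [x₁, …, xₘ]` and `ū = [x₁⁻¹, …, xₘ⁻¹]`, and
`g = p₁ ⋯ pₖ` with palindromes `pᵢ`. Sandwiching the palindromes alternately between `u, uʳ` and
`ū, ūʳ` gives the palindromes `u p₁ uʳ, ū p₂ ūʳ, u p₃ uʳ, …`, whose product telescopes to
`h g h⁻¹` if `k` is even and to `h g (uʳ)` if `k` is odd. In the odd case one more palindrome
`ū ūʳ = (uʳ)⁻¹ h⁻¹` finishes the job.
-/

section Palindromes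

variable {G : Type*} [Group G] {X : Set G}

def IsWord (X : Set G) (w : List G) : Prop :=
  ∀ g ∈ w, g ∈ X ∨ g⁻¹ ∈ X

lemma IsWord.append {v w : List G} (hv : IsWord X v) (hw : IsWord X w) : IsWord X (v ++ w) := by
  intro g hg
  rcases List.mem_append.mp hg with hg | hg
  exacts [hv g hg, hw g hg]

lemma IsWord.reverse {w : List G} (hw : IsWord X w) : IsWord X w.reverse :=
  fun g hg => hw g (List.mem_reverse.mp hg)

lemma IsWord.map_inv {w : List G} (hw : IsWord X w) : IsWord X (w.map (·⁻¹)) := by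
  intro g hg
  obtain ⟨x, hx, rfl⟩ := List.mem_map.mp hg
  rw [inv_inv]
  exact (hw x hx).symm

lemma exists_isWord_prod_eq_of_mem_closure {h : G} (hh : h ∈ Subgroup.closure X) :
    ∃ u, IsWord X u ∧ u.prod = h := by
  rw [← Subgroup.mem_toSubmonoid, Subgroup.closure_toSubmonoid] at hh
  obtain ⟨u, hu, rfl⟩ := Submonoid.exists_list_of_mem_closure hh
  exact ⟨u, fun g hg => (hu g hg).imp id Set.mem_inv.mp, rfl⟩

lemma IsPalindromicWord.nil_s18 : IsPalindromicWord X ([] : List G) :=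
  ⟨fun _ hg => absurd hg List.not_mem_nil, rfl⟩

lemma IsPalindromicWord.sandwich {v w : List G} (hv : IsWord X v) (hw : IsPalindromicWord X w) :
    IsPalindromicWord X (v ++ w ++ v.reverse) :=
  ⟨(hv.append hw.1).append hv.reverse, by simp [hw.2]⟩

lemma IsPalindromicWord.append_reverse_s18 {v : List G} (hv : IsWord X v) :
    IsPalindromicWord X (v ++ v.reverse) := by
  simpa using IsPalindromicWord.nil_s18.sandwich hv

lemma isProdOfPalindromes_zero_s18 {g : G} : IsProdOfPalindromes X 0 g ↔ g = 1 := by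
  constructor
  · rintro ⟨ws, hlen, -, rfl⟩
    simp [List.length_eq_zero_iff.mp hlen]
  · rintro rfl
    exact ⟨[], rfl, by simp, rfl⟩

lemma isProdOfPalindromes_succ {n : ℕ} {g : G} :
    IsProdOfPalindromes X (n + 1) g ↔
      ∃ w g', IsPalindromicWord X w ∧ IsProdOfPalindromes X n g' ∧ g = w.prod * g' := by
  constructor
  · rintro ⟨_ | ⟨w, ws⟩, hlen, hws, rfl⟩
    · simp at hlen
    · exact ⟨w, _, hws w (by simp), ⟨ws, by simpa using hlen, fun v hv => hws v (by simp [hv]),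
        rfl⟩, by simp⟩
  · rintro ⟨w, _, hw, ⟨ws, hlen, hws, rfl⟩, rfl⟩
    exact ⟨w :: ws, by simp [hlen], by simpa using ⟨hw, hws⟩, by simp⟩

lemma IsProdOfPalindromes.mul_prod {n : ℕ} {g : G} {w : List G}
    (hg : IsProdOfPalindromes X n g) (hw : IsPalindromicWord X w) :
    IsProdOfPalindromes X (n + 1) (g * w.prod) := by
  obtain ⟨ws, hlen, hws, rfl⟩ := hg
  refine ⟨ws ++ [w], by simp [hlen], fun v hv => ?_, by simp⟩
  rcases List.mem_append.mp hv with hv | hv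
  exacts [hws v hv, (List.mem_singleton.mp hv) ▸ hw]

lemma IsProdOfPalindromes.alternating_conj {k : ℕ} {g : G} (hg : IsProdOfPalindromes X k g)
    {u : List G} (hu : IsWord X u) :
    IsProdOfPalindromes X k (u.prod * g * if Even k then u.prod⁻¹ else u.reverse.prod) := by
  induction k generalizing g u with
  | zero =>
    rw [isProdOfPalindromes_zero_s18] at hg ⊢
    simp [hg]
  | succ k ih =>
    obtain ⟨w, g', hw, hg', rfl⟩ := isProdOfPalindromes_succ.mp hg
    have hinv : (u.map (·⁻¹)).prod = u.reverse.prod⁻¹ := by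
      rw [List.prod_reverse_noncomm, inv_inv]
    have hinv_rev : (u.map (·⁻¹)).reverse.prod = u.prod⁻¹ := (List.prod_inv_reverse u).symm
    have htail := ih hg' hu.map_inv
    rw [hinv, hinv_rev, inv_inv] at htail
    refine isProdOfPalindromes_succ.mpr ⟨_, _, hw.sandwich hu, htail, ?_⟩
    by_cases hk : Even k <;>
      simp only [Nat.even_add_one, hk, not_true, not_false_eq_true, if_true, if_false,
        List.prod_append] <;>
      group

end Palindromes

theorem conjugate_prod_of_palindromes {G : Type*} [Group G]
    (X : Set G) (k : ℕ) (g : G) (hg : IsProdOfPalindromes X k g)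
    (h : G) (hh : h ∈ Subgroup.closure X) :
    IsProdOfPalindromes X (k + 1) (h * g * h⁻¹) := by
  obtain ⟨u, hu, rfl⟩ := exists_isWord_prod_eq_of_mem_closure hh
  have hconj := hg.alternating_conj hu
  by_cases hk : Even k
  · simpa [hk] using hconj.mul_prod IsPalindromicWord.nil_s18
  · have hfix := hconj.mul_prod (IsPalindromicWord.append_reverse_s18 hu.map_inv)
    rw [if_neg hk] at hfix
    convert hfix using 1
    rw [List.prod_append, ← List.prod_inv_reverse, List.prod_reverse_noncomm]
    group
end
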